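/- arXiv:2602.03861 — 8 statements merged into one kernel-verified Lean document; each statement's English description precedes it below -/
import Mathlib

section
/- If m ≥ 6 is an odd integer, then λ(K_1 ∨ (K_{1,(m−3)/2} ∪ 2K_1)) equals the largest real root of x⁴ − m·x² − (m−3)·x + (m−3) = 0, and moreover λ(K_1 ∨ (K_{1,(m−3)/2} ∪ 2K_1)) > (1 + √(4m−7))/2. -/
open Finset

/-- The spectral radius of a finite simple graph: the supremum of the real
spectrum of its adjacency matrix. -/
noncomputable def specRad {V : Type*} [Fintype V] [DecidableEq V] (G : SimpleGraph V) : ℝ :=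
  letI := Classical.decRel G.Adj
  sSup (spectrum ℝ (SimpleGraph.adjMatrix ℝ G))

/-- The fish graph `H(4,3)`: a 4-cycle 0-1-2-3-0 and a triangle 0-4-5 sharing vertex 0. -/
def H43 : SimpleGraph (Fin 6) :=
  SimpleGraph.fromEdgeSet {s(0, 1), s(1, 2), s(2, 3), s(3, 0), s(0, 4), s(4, 5), s(5, 0)}

/-- The bowtie graph `H(3,3)` (also `F₂`): two triangles 0-1-2 and 0-3-4 sharing vertex 0. -/
def H33 : SimpleGraph (Fin 5) :=
  SimpleGraph.fromEdgeSet {s(0, 1), s(1, 2), s(2, 0), s(0, 3), s(3, 4), s(4, 0)}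

/-- `G` contains a (not necessarily induced) subgraph isomorphic to `H`. -/
def HasSubgraphCopy {W V : Type*} (H : SimpleGraph W) (G : SimpleGraph V) : Prop :=
  ∃ f : W → V, Function.Injective f ∧ ∀ ⦃a b⦄, H.Adj a b → G.Adj (f a) (f b)

/-- `G` is `H`-free: it contains no subgraph isomorphic to `H`. -/
def GraphFree {W V : Type*} (H : SimpleGraph W) (G : SimpleGraph V) : Prop :=
  ¬ HasSubgraphCopy H G

/-- The book graph `K₂ ∨ k·K₁`, on vertices `Fin (k+2)`: vertices 0 and 1 form the `K₂`
and are joined to all of the `k` remaining independent vertices. -/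
def bookGraph (k : ℕ) : SimpleGraph (Fin (k + 2)) where
  Adj x y := x ≠ y ∧ (x.val < 2 ∨ y.val < 2)
  symm := ⟨fun _ _ h => ⟨h.1.symm, h.2.symm⟩⟩
  loopless := ⟨fun _ h => h.1 rfl⟩

/-- `S⁻`: the graph obtained from the book graph `K₂ ∨ k·K₁` by deleting one edge
incident to a vertex of degree two (the edge between vertices 1 and 2). -/
def bookMinus (k : ℕ) : SimpleGraph (Fin (k + 2)) where
  Adj x y := x ≠ y ∧ (x.val < 2 ∨ y.val < 2) ∧
    ¬(x.val = 1 ∧ y.val = 2) ∧ ¬(x.val = 2 ∧ y.val = 1)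
  symm := by
    constructor
    rintro x y ⟨h1, h2, h3, h4⟩
    exact ⟨h1.symm, h2.symm, fun h => h4 ⟨h.2, h.1⟩, fun h => h3 ⟨h.2, h.1⟩⟩
  loopless := ⟨fun _ h => h.1 rfl⟩

/-- The graph `K₁ ∨ (K_{1,t} ∪ 2K₁)` on `Fin (t+4)`: vertex 0 is the apex joined to all
other vertices, vertex 1 is the star center joined to the `t` leaves `4, …, t+3`,
and vertices 2, 3 are the two extra vertices (joined only to the apex). -/
def extGraph (t : ℕ) : SimpleGraph (Fin (t + 4)) where
  Adj x y := x ≠ y ∧ (x.val = 0 ∨ y.val = 0 ∨ (x.val = 1 ∧ 4 ≤ y.val) ∨ (y.val = 1 ∧ 4 ≤ x.val))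
  symm := by
    constructor
    rintro x y ⟨h1, h2⟩
    exact ⟨h1.symm, by tauto⟩
  loopless := ⟨fun _ h => h.1 rfl⟩

/-- The star `K_{1,r}` on `Fin (r+1)`, with center 0. -/
def starGraph (r : ℕ) : SimpleGraph (Fin (r + 1)) where
  Adj x y := x ≠ y ∧ (x.val = 0 ∨ y.val = 0)
  symm := ⟨fun _ _ h => ⟨h.1.symm, h.2.symm⟩⟩
  loopless := ⟨fun _ h => h.1 rfl⟩

/-- Membership in the family `𝒢(m, H(4,3))`: `H(4,3)`-free, `m` edges, no isolated vertices. -/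
def memFamily {V : Type*} [Fintype V] [DecidableEq V] (m : ℕ) (G : SimpleGraph V) : Prop :=
  GraphFree H43 G ∧ G.edgeSet.ncard = m ∧ ∀ v : V, ∃ w, G.Adj v w

/-- `e(S)`: the number of edges of `G` with both endpoints in `S`. -/
noncomputable def eIn {V : Type*} (G : SimpleGraph V) (S : Set V) : ℕ :=
  {e ∈ G.edgeSet | ∀ v ∈ e, v ∈ S}.ncard

/-- `e(S,T)`: the number of edges of `G` with one endpoint in `S` and the other in `T`. -/
noncomputable def eBetween {V : Type*} (G : SimpleGraph V) (S T : Set V) : ℕ :=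
  {e ∈ G.edgeSet | ∃ a ∈ S, ∃ b ∈ T, e = s(a, b)}.ncard

/-- `d_S(u)`: the number of neighbours of `u` inside `S`. -/
noncomputable def dIn {V : Type*} (G : SimpleGraph V) (S : Set V) (u : V) : ℕ :=
  (S ∩ G.neighborSet u).ncard

/-- `U = N(u)`. -/
def Uset {V : Type*} (G : SimpleGraph V) (u : V) : Set V := G.neighborSet u

/-- `W = V(G) \ (U ∪ {u})`. -/
def Wset {V : Type*} (G : SimpleGraph V) (u : V) : Set V :=
  Set.univ \ (G.neighborSet u ∪ {u})

/-- `U₀ = {v ∈ U : d_U(v) = 0}`. -/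
noncomputable def U0set {V : Type*} (G : SimpleGraph V) (u : V) : Set V :=
  {v ∈ G.neighborSet u | dIn G (G.neighborSet u) v = 0}

/-- `U₊ = U \ U₀`. -/
noncomputable def Uplusset {V : Type*} (G : SimpleGraph V) (u : V) : Set V :=
  {v ∈ G.neighborSet u | dIn G (G.neighborSet u) v ≠ 0}

/-- `G` attains the maximum spectral radius among all graphs in `𝒢(m, H(4,3))` other than
the book graph `K₂ ∨ ((m-1)/2)·K₁`. -/
def isExtremal {V : Type*} [Fintype V] [DecidableEq V] (m : ℕ) (G : SimpleGraph V) : Prop :=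
  memFamily m G ∧ ¬ Nonempty (G ≃g bookGraph ((m - 1) / 2)) ∧
    ∀ (n : ℕ) (H : SimpleGraph (Fin n)), memFamily m H →
      ¬ Nonempty (H ≃g bookGraph ((m - 1) / 2)) → specRad H ≤ specRad G

/-!
Write `m = 2t + 3`. The vector with entries `λ(λ + t)` on the apex, `λ(λ² - t - 2)` on the star
centre, `λ + t` on the two pendant vertices and `λ² + λ - 2` on the leaves is an eigenvector of
`extGraph t` for `λ` exactly when `λ` is a root of the quartic; for the largest root it is
positive, and a positive eigenvector of a symmetric nonnegative matrix belongs to its spectral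
radius. Both positivity and the lower bound come from `β = (1 + √(4m - 7))/2`: since
`β² = β + m - 2`, the quartic takes the value `-1` at `β`, so it has a root beyond `β`.
-/

namespace Matrix

variable {n K : Type*} [Fintype n]

theorem mem_spectrum_iff_exists_mulVec_eq_smul [DecidableEq n] [Field K] {A : Matrix n n K}
    {μ : K} :
    μ ∈ spectrum K A ↔ ∃ x ≠ 0, A *ᵥ x = μ • x := by
  rw [← spectrum_toLin', ← Module.End.hasEigenvalue_iff_mem_spectrum]
  constructor
  · intro h
    obtain ⟨x, hx⟩ := h.exists_hasEigenvector
    exact ⟨x, hx.2, by simpa using Module.End.mem_eigenspace_iff.mp hx.1⟩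
  · rintro ⟨x, hx0, hx⟩
    exact Module.End.hasEigenvalue_of_hasEigenvector
      ⟨Module.End.mem_eigenspace_iff.mpr (by simpa using hx), hx0⟩

variable {A : Matrix n n ℝ} {x y : n → ℝ} {r μ : ℝ}

theorem abs_mul_abs_le_mulVec_abs (hA : ∀ i j, 0 ≤ A i j) (hy : A *ᵥ y = μ • y) (i : n) :
    |μ| * |y i| ≤ (A *ᵥ fun j => |y j|) i := by
  calc |μ| * |y i| = |(A *ᵥ y) i| := by rw [hy, Pi.smul_apply, smul_eq_mul, abs_mul]
    _ ≤ ∑ j, |A i j * y j| := Finset.abs_sum_le_sum_abs _ _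
    _ = (A *ᵥ fun j => |y j|) i := by
      simp only [mulVec, dotProduct, abs_mul, abs_of_nonneg (hA i _)]

theorem abs_le_of_mulVec_eq_smul_of_pos (hsymm : A.IsSymm) (hA : ∀ i j, 0 ≤ A i j)
    (hx : ∀ i, 0 < x i) (hxr : A *ᵥ x = r • x) (hy0 : y ≠ 0) (hy : A *ᵥ y = μ • y) :
    |μ| ≤ r := by
  set z : n → ℝ := fun j => |y j|
  have hxz : 0 < x ⬝ᵥ z := by
    obtain ⟨i, hi⟩ := Function.ne_iff.mp hy0
    exact Finset.sum_pos' (fun j _ => mul_nonneg (hx j).le (abs_nonneg _))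
      ⟨i, Finset.mem_univ i, mul_pos (hx i) (abs_pos.mpr hi)⟩
  have hpair : x ⬝ᵥ (A *ᵥ z) = r * (x ⬝ᵥ z) := by
    rw [dotProduct_mulVec, ← mulVec_transpose, hsymm.eq, hxr, smul_dotProduct, smul_eq_mul]
  have hle : |μ| * (x ⬝ᵥ z) ≤ x ⬝ᵥ (A *ᵥ z) := by
    rw [dotProduct, dotProduct, Finset.mul_sum]
    refine Finset.sum_le_sum fun i _ => ?_
    rw [mul_left_comm]
    exact mul_le_mul_of_nonneg_left (abs_mul_abs_le_mulVec_abs hA hy i) (hx i).le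
  exact le_of_mul_le_mul_right (hpair ▸ hle) hxz

theorem sSup_spectrum_eq_of_mulVec_eq_smul_of_pos [DecidableEq n] [Nonempty n] (hsymm : A.IsSymm)
    (hA : ∀ i j, 0 ≤ A i j) (hx : ∀ i, 0 < x i) (hxr : A *ᵥ x = r • x) :
    sSup (spectrum ℝ A) = r := by
  have hx0 : x ≠ 0 := fun h => (hx (Classical.arbitrary n)).ne' (congrFun h _)
  refine IsGreatest.csSup_eq ⟨mem_spectrum_iff_exists_mulVec_eq_smul.mpr ⟨x, hx0, hxr⟩, ?_⟩
  intro μ hμ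
  obtain ⟨y, hy0, hy⟩ := mem_spectrum_iff_exists_mulVec_eq_smul.mp hμ
  exact (le_abs_self μ).trans (abs_le_of_mulVec_eq_smul_of_pos hsymm hA hx hxr hy0 hy)

end Matrix

noncomputable def quartic (M x : ℝ) : ℝ :=
  x ^ 4 - M * x ^ 2 - (M - 3) * x + (M - 3)

/-- With `T = t` these entries satisfy the eigenvalue equations of `extGraph t` at every vertex
except the star centre identically; at the star centre the equation is `quartic (2t + 3) L = 0`. -/
noncomputable def extProfile (L T : ℝ) : ℕ → ℝ
  | 0 => L * (L + T)
  | 1 => L * (L ^ 2 - T - 2)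
  | 2 | 3 => L + T
  | _ => L ^ 2 + L - 2

open Matrix SimpleGraph in
theorem extGraph_adjMatrix_mulVec_extProfile (t : ℕ) [DecidableRel (extGraph t).Adj] {L : ℝ}
    (hL : quartic (2 * t + 3) L = 0) :
    adjMatrix ℝ (extGraph t) *ᵥ (fun i : Fin (t + 4) => extProfile L t i) =
      L • fun i : Fin (t + 4) => extProfile L t i := by
  rw [quartic] at hL
  ext ⟨v, hv⟩
  have hrow :
      (adjMatrix ℝ (extGraph t) *ᵥ (fun i : Fin (t + 4) => extProfile L t i)) ⟨v, hv⟩ =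
        ∑ k ∈ Finset.range (t + 4),
          if v ≠ k ∧ (v = 0 ∨ k = 0 ∨ (v = 1 ∧ 4 ≤ k) ∨ (k = 1 ∧ 4 ≤ v))
          then extProfile L t k else 0 := by
    refine (Finset.sum_congr rfl fun j _ => ?_).trans (Fin.sum_univ_eq_sum_range _ _)
    simp only [adjMatrix_apply, ite_mul, one_mul, zero_mul]
    exact if_congr (and_congr_left' (not_congr Fin.ext_iff)) rfl rfl
  rw [hrow]
  simp only [Finset.sum_range_succ']
  rw [Pi.smul_apply, smul_eq_mul]
  rcases v with _ | _ | _ | _ | w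
  all_goals simp [extProfile]
  · ring
  · linear_combination (-1 : ℝ) * hL
  · ring

theorem extProfile_pos {L T : ℝ} (hT : 0 ≤ T) (hL : 0 < L) (hLT : T + 2 < L ^ 2) (k : ℕ) :
    0 < extProfile L T k := by
  unfold extProfile
  split <;> nlinarith

open SimpleGraph in
theorem specRad_extGraph (t : ℕ) {L : ℝ} (hL : 0 < L) (hLt : t + 2 < L ^ 2)
    (hq : quartic (2 * t + 3) L = 0) : specRad (extGraph t) = L := by
  unfold specRad
  let _ := Classical.decRel (extGraph t).Adj
  refine Matrix.sSup_spectrum_eq_of_mulVec_eq_smul_of_pos (isSymm_adjMatrix _) (fun i j => ?_)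
    (fun i => extProfile_pos t.cast_nonneg hL hLt i) (extGraph_adjMatrix_mulVec_extProfile t hq)
  rw [adjMatrix_apply]
  split <;> norm_num

theorem sq_half_one_add_sqrt {M : ℝ} (hM : 7 ≤ 4 * M) :
    ((1 + √(4 * M - 7)) / 2) ^ 2 = (1 + √(4 * M - 7)) / 2 + (M - 2) := by
  linear_combination Real.sq_sqrt (by linarith : 0 ≤ 4 * M - 7) / 4

theorem quartic_half_one_add_sqrt {M : ℝ} (hM : 7 ≤ 4 * M) :
    quartic M ((1 + √(4 * M - 7)) / 2) = -1 := by
  unfold quartic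
  linear_combination
    (((1 + √(4 * M - 7)) / 2) ^ 2 + (1 + √(4 * M - 7)) / 2 - 1) * sq_half_one_add_sqrt hM

theorem half_one_add_sqrt_lt_of_forall_quartic_eq_zero_le {M lam : ℝ} (hM : 2 ≤ M)
    (hmax : ∀ y, quartic M y = 0 → y ≤ lam) : (1 + √(4 * M - 7)) / 2 < lam := by
  have hβM : (1 + √(4 * M - 7)) / 2 ≤ M := by
    linarith [(Real.sqrt_le_iff.mpr ⟨by linarith, by nlinarith⟩ : √(4 * M - 7) ≤ 2 * M - 1)]
  set β := (1 + √(4 * M - 7)) / 2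
  have hβ : quartic M β = -1 := quartic_half_one_add_sqrt (by linarith)
  have hM0 : 0 ≤ quartic M M := by
    unfold quartic
    nlinarith [mul_nonneg (sq_nonneg M) (by nlinarith : (0 : ℝ) ≤ M ^ 2 - M - 1)]
  obtain ⟨y, hy, hy0⟩ := intermediate_value_Icc hβM (by unfold quartic; fun_prop)
    ⟨hβ.trans_le (by norm_num), hM0⟩
  have hyβ : β ≠ y := by
    rintro rfl
    norm_num [hβ] at hy0
  exact (hy.1.lt_of_ne hyβ).trans_le (hmax y hy0)

/-- For odd `m ≥ 6`, `λ(K₁ ∨ (K_{1,(m-3)/2} ∪ 2K₁))` is the largest real root of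
`x⁴ - m·x² - (m-3)·x + (m-3) = 0`, and it exceeds `(1 + √(4m-7))/2`. -/
theorem stmt_1 (m : ℕ) (hm : 6 ≤ m) (hodd : Odd m)
    (lam : ℝ)
    (hroot : lam ^ 4 - (m : ℝ) * lam ^ 2 - ((m : ℝ) - 3) * lam + ((m : ℝ) - 3) = 0)
    (hmaxroot : ∀ y : ℝ, y ^ 4 - (m : ℝ) * y ^ 2 - ((m : ℝ) - 3) * y + ((m : ℝ) - 3) = 0 →
      y ≤ lam) :
    specRad (extGraph ((m - 3) / 2)) = lam ∧
      (1 + Real.sqrt (4 * (m : ℝ) - 7)) / 2 < specRad (extGraph ((m - 3) / 2)) := by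
  set t := (m - 3) / 2
  have hmt : (m : ℝ) = 2 * t + 3 := by
    have : m = 2 * t + 3 := by obtain ⟨k, hk⟩ := hodd; omega
    exact_mod_cast this
  have hm6 : (6 : ℝ) ≤ m := by exact_mod_cast hm
  have hlow := half_one_add_sqrt_lt_of_forall_quartic_eq_zero_le (by linarith) hmaxroot
  have hsq := sq_half_one_add_sqrt (M := m) (by linarith)
  have hsqrt := Real.sqrt_nonneg (4 * (m : ℝ) - 7)
  have hspec : specRad (extGraph t) = lam :=
    specRad_extGraph t (by linarith) (by nlinarith) (hmt ▸ hroot)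
  exact ⟨hspec, hspec ▸ hlow⟩
end

section
/- Let G be an H(4,3)-free graph and let u be any vertex of G. If the subgraph of G induced by the neighborhood N(u) contains at least 7 edges, then every non-trivial connected component of G[N(u)] is isomorphic to a star K_{1,r} for some r ≥ 1. -/
open Finset

/-!
A path `p - q - r` in `G[N(u)]` together with an edge `x y` avoiding it would give, with `u`,
the 4-cycle `u p q r` and the triangle `u x y` of a copy of `H(4,3)`; so `G[N(u)]` contains no
`P₃ ∪ K₂`. In such a graph, if two edges `a b` and `x y` are disjoint, every edge touching
`{a, b, x, y}` stays inside it: so either there are at most 6 edges, or a third disjoint edge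
exists and then every vertex has degree at most one. If no two edges are disjoint, the edges
either share a vertex or form a triangle. Hence with at least 7 edges, `G[N(u)]` is a matching or
a star plus isolated vertices.
-/

theorem nonempty_starGraph_iso_starGraph {W : Type*} [Finite W] (v : W) :
    Nonempty (SimpleGraph.starGraph v ≃g starGraph (Nat.card W - 1)) := by
  have : Nonempty W := ⟨v⟩
  let e₀ : W ≃ Fin (Nat.card W - 1 + 1) :=
    Finite.equivFinOfCardEq (Nat.sub_add_cancel Nat.card_pos).symm
  let e : W ≃ Fin (Nat.card W - 1 + 1) := e₀.trans (Equiv.swap (e₀ v) 0)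
  have he : ∀ a, e a = 0 ↔ a = v := fun a => by
    rw [← e.apply_eq_iff_eq (y := v)]
    simp [e]
  exact ⟨⟨e, by simp [starGraph, he]⟩⟩

namespace SimpleGraph

variable {α : Type*} {H : SimpleGraph α}

/-- Every edge of `H` meets every path `p - q - r`, i.e. `H` has no subgraph `P₃ ∪ K₂`. -/
def P3UnionK2Free (H : SimpleGraph α) : Prop :=
  ∀ ⦃p q r x y⦄, H.Adj p q → H.Adj q r → p ≠ r → H.Adj x y →
    x = p ∨ x = q ∨ x = r ∨ y = p ∨ y = q ∨ y = r

theorem ncard_edgeSet_le_choose_two [DecidableEq α] (S : Finset α)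
    (hS : ∀ a b, H.Adj a b → a ∈ S) : H.edgeSet.ncard ≤ (#S).choose 2 := by
  have hsub : H.edgeSet ⊆ ↑(S.offDiag.image Sym2.mk.uncurry) := by
    rintro ⟨a, b⟩ hab
    exact mem_image.2 ⟨(a, b), mem_offDiag.2 ⟨hS a b hab, hS b a hab.symm, hab.ne⟩, rfl⟩
  calc H.edgeSet.ncard ≤ (↑(S.offDiag.image Sym2.mk.uncurry) : Set (Sym2 α)).ncard :=
        Set.ncard_le_ncard hsub (Finset.finite_toSet _)
    _ = (#S).choose 2 := by rw [Set.ncard_coe_finset, Sym2.card_image_offDiag]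

theorem exists_forall_adj_eq_of_forall_adj_meet
    (hmeet : ∀ ⦃a b x y⦄, H.Adj a b → H.Adj x y → x = a ∨ x = b ∨ y = a ∨ y = b)
    (h4 : 4 ≤ H.edgeSet.ncard) : ∃ v, ∀ ⦃a b⦄, H.Adj a b → a = v ∨ b = v := by
  classical
  obtain ⟨⟨a, b⟩, hab⟩ := Set.nonempty_of_ncard_ne_zero (by omega : H.edgeSet.ncard ≠ 0)
  by_contra! hno
  obtain ⟨c, hbc, hca⟩ : ∃ c, H.Adj b c ∧ c ≠ a := by
    obtain ⟨x, y, hxy, hxa, hya⟩ := hno a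
    rcases hmeet hab hxy with rfl | rfl | rfl | rfl
    exacts [(hxa rfl).elim, ⟨y, hxy, hya⟩, (hya rfl).elim, ⟨x, hxy.symm, hxa⟩]
  obtain ⟨c', hac', hcb⟩ : ∃ c', H.Adj a c' ∧ c' ≠ b := by
    obtain ⟨x, y, hxy, hxb, hyb⟩ := hno b
    rcases hmeet hab hxy with rfl | rfl | rfl | rfl
    exacts [⟨y, hxy, hyb⟩, (hxb rfl).elim, ⟨x, hxy.symm, hxb⟩, (hyb rfl).elim]
  have hc' : c' = c := by
    have := hmeet hbc hac'
    grind [hab.ne]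
  subst hc'
  -- an edge meeting all three sides of the triangle `a b c` is one of them
  have hS : ∀ p q, H.Adj p q → p ∈ ({a, b, c'} : Finset α) := by
    intro p q hpq
    have := hmeet hpq hab; have := hmeet hpq hac'; have := hmeet hpq hbc
    simp only [Finset.mem_insert, Finset.mem_singleton]
    grind [hab.ne, hpq.ne]
  have := ncard_edgeSet_le_choose_two _ hS
  have := Nat.choose_le_choose 2 (Finset.card_le_three (a := a) (b := b) (c := c'))
  simp only [Nat.choose] at this
  omega

namespace P3UnionK2Free

theorem adj_eq_of_disjoint (hH : H.P3UnionK2Free) {a b x y z : α} (hab : H.Adj a b)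
    (hxy : H.Adj x y) (hxa : x ≠ a) (hxb : x ≠ b) (hya : y ≠ a) (hyb : y ≠ b) (haz : H.Adj a z) :
    z = b ∨ z = x ∨ z = y := by
  by_contra! h
  have := hH haz.symm hab h.1 hxy
  grind

theorem adj_eq_of_three_disjoint (hH : H.P3UnionK2Free) {a b x y z w t : α} (hab : H.Adj a b)
    (hxy : H.Adj x y) (hzw : H.Adj z w) (hxa : x ≠ a) (hxb : x ≠ b) (hya : y ≠ a) (hyb : y ≠ b)
    (hza : z ≠ a) (hzb : z ≠ b) (hwa : w ≠ a) (hwb : w ≠ b)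
    (hzx : z ≠ x) (hzy : z ≠ y) (hwx : w ≠ x) (hwy : w ≠ y) (hat : H.Adj a t) : t = b := by
  have := hH.adj_eq_of_disjoint hab hxy hxa hxb hya hyb hat
  have := hH.adj_eq_of_disjoint hab hzw hza hzb hwa hwb hat
  grind

theorem eq_of_adj_of_adj_of_isolated_edge (hH : H.P3UnionK2Free) {a b : α} (hab : H.Adj a b)
    (ha : ∀ t, H.Adj a t → t = b) (hb : ∀ t, H.Adj b t → t = a) {p q r : α}
    (hqp : H.Adj q p) (hqr : H.Adj q r) : p = r := by
  by_contra hpr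
  have := hH hqp.symm hqr hpr hab
  have := ha q; have := ha p; have := ha r; have := hb q; have := hb p; have := hb r
  grind [SimpleGraph.adj_comm]

theorem forall_adj_eq_or_exists_center (hH : H.P3UnionK2Free) (h7 : 7 ≤ H.edgeSet.ncard) :
    (∀ ⦃p q r⦄, H.Adj q p → H.Adj q r → p = r) ∨ ∃ v, ∀ ⦃a b⦄, H.Adj a b → a = v ∨ b = v := by
  classical
  by_cases hdisj : ∃ a b x y, H.Adj a b ∧ H.Adj x y ∧ x ≠ a ∧ x ≠ b ∧ y ≠ a ∧ y ≠ b
  · obtain ⟨a, b, x, y, hab, hxy, hxa, hxb, hya, hyb⟩ := hdisj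
    by_cases hthird : ∃ z w, H.Adj z w ∧ z ≠ a ∧ z ≠ b ∧ w ≠ a ∧ w ≠ b ∧
        z ≠ x ∧ z ≠ y ∧ w ≠ x ∧ w ≠ y
    · obtain ⟨z, w, hzw, hza, hzb, hwa, hwb, hzx, hzy, hwx, hwy⟩ := hthird
      left
      refine fun p q r => hH.eq_of_adj_of_adj_of_isolated_edge hzw (fun t => ?_) (fun t => ?_)
      · exact hH.adj_eq_of_three_disjoint hzw hab hxy (Ne.symm hza) (Ne.symm hwa)
          (Ne.symm hzb) (Ne.symm hwb) (Ne.symm hzx) (Ne.symm hwx) (Ne.symm hzy) (Ne.symm hwy)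
          hxa hxb hya hyb
      · exact hH.adj_eq_of_three_disjoint hzw.symm hab hxy (Ne.symm hwa) (Ne.symm hza)
          (Ne.symm hwb) (Ne.symm hzb) (Ne.symm hwx) (Ne.symm hzx) (Ne.symm hwy) (Ne.symm hzy)
          hxa hxb hya hyb
    · exfalso
      have hclosed : ∀ q p, q ∈ ({a, b, x, y} : Finset α) → H.Adj q p →
          p ∈ ({a, b, x, y} : Finset α) := by
        intro q p hq hqp
        simp only [Finset.mem_insert, Finset.mem_singleton] at hq ⊢
        rcases hq with rfl | rfl | rfl | rfl
        · have := hH.adj_eq_of_disjoint hab hxy hxa hxb hya hyb hqp; tauto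
        · have := hH.adj_eq_of_disjoint hab.symm hxy hxb hxa hyb hya hqp; tauto
        · have := hH.adj_eq_of_disjoint hxy hab hxa.symm hya.symm hxb.symm hyb.symm hqp
          tauto
        · have := hH.adj_eq_of_disjoint hxy.symm hab hya.symm hxa.symm hyb.symm hxb.symm hqp
          tauto
      have hS : ∀ p q, H.Adj p q → p ∈ ({a, b, x, y} : Finset α) := by
        intro p q hpq
        by_contra hp
        have hq : q ∉ ({a, b, x, y} : Finset α) := fun hq => hp (hclosed q p hq hpq.symm)
        simp only [Finset.mem_insert, Finset.mem_singleton, not_or] at hp hq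
        exact hthird ⟨p, q, hpq, hp.1, hp.2.1, hq.1, hq.2.1, hp.2.2.1, hp.2.2.2, hq.2.2.1,
          hq.2.2.2⟩
      have := ncard_edgeSet_le_choose_two _ hS
      have := Nat.choose_le_choose 2 (Finset.card_le_four (a := a) (b := b) (c := x) (d := y))
      simp only [Nat.choose] at this
      omega
  · refine .inr (exists_forall_adj_eq_of_forall_adj_meet (fun a b x y hab hxy => ?_) (by omega))
    by_contra! h
    exact hdisj ⟨a, b, x, y, hab, hxy, h.1, h.2.1, h.2.2.1, h.2.2.2⟩

end P3UnionK2Free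

namespace ConnectedComponent

theorem adj_of_forall_adj_eq {c : H.ConnectedComponent} {v w : α} (hv : v ∈ c.supp)
    (hcenter : ∀ a ∈ c.supp, ∀ b, H.Adj a b → a = v ∨ b = v) (hw : w ∈ c.supp)
    (hwv : w ≠ v) : H.Adj v w := by
  rw [mem_supp_iff] at hv hw
  obtain ⟨p⟩ : H.Reachable w v := ConnectedComponent.exact (hw.trans hv.symm)
  cases p with
  | nil => exact (hwv rfl).elim
  | cons h _ =>
    obtain hw' | rfl := hcenter w ((mem_supp_iff _ _).2 hw) _ h
    exacts [(hwv hw').elim, h.symm]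

theorem induce_supp_eq_starGraph {c : H.ConnectedComponent} {v : α} (hv : v ∈ c.supp)
    (hcenter : ∀ a ∈ c.supp, ∀ b, H.Adj a b → a = v ∨ b = v) :
    H.induce c.supp = starGraph ⟨v, hv⟩ := by
  ext a b
  simp only [comap_adj, Function.Embedding.subtype_apply, starGraph_adj, ne_eq, Subtype.ext_iff]
  refine ⟨fun hab => ⟨hab.ne, hcenter a a.2 b hab⟩, ?_⟩
  rintro ⟨hab, hav | hbv⟩
  · exact hav ▸ adj_of_forall_adj_eq hv hcenter b.2 (hav ▸ Ne.symm hab)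
  · exact (hbv ▸ adj_of_forall_adj_eq hv hcenter a.2 (hbv ▸ hab)).symm

theorem eq_or_eq_of_mem_supp {a b w : α} (hmatch : ∀ ⦃p q r⦄, H.Adj q p → H.Adj q r → p = r)
    (hab : H.Adj a b) (hw : w ∈ (H.connectedComponentMk a).supp) : w = a ∨ w = b := by
  have : Relation.ReflTransGen H.Adj a w :=
    (reachable_iff_reflTransGen _ _).1 (ConnectedComponent.exact hw).symm
  clear hw
  induction this with
  | refl => exact .inl rfl
  | tail _ hxy ih =>
    rcases ih with h | h <;> rw [h] at hxy
    · exact .inr (hmatch hxy hab)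
    · exact .inl (hmatch hxy hab.symm)

theorem exists_iso_starGraph {c : H.ConnectedComponent} [Finite c.supp] {a b v : α}
    (hab : H.Adj a b) (ha : a ∈ c.supp) (hv : v ∈ c.supp)
    (hcenter : ∀ a ∈ c.supp, ∀ b, H.Adj a b → a = v ∨ b = v) :
    ∃ r, 1 ≤ r ∧ Nonempty (H.induce c.supp ≃g _root_.starGraph r) := by
  have hb : b ∈ c.supp := ((mem_supp_iff _ _).1 ha ▸ ConnectedComponent.sound hab.symm.reachable)
  have : Nontrivial c.supp := ⟨⟨a, ha⟩, ⟨b, hb⟩, by simpa [Subtype.ext_iff] using hab.ne⟩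
  refine ⟨Nat.card c.supp - 1, ?_,
    induce_supp_eq_starGraph hv hcenter ▸ nonempty_starGraph_iso_starGraph _⟩
  have := Finite.one_lt_card_iff_nontrivial.2 this
  omega

end ConnectedComponent

theorem P3UnionK2Free.exists_center_mem_supp (hH : H.P3UnionK2Free) (h7 : 7 ≤ H.edgeSet.ncard)
    {a b : α} (hab : H.Adj a b) : ∃ v ∈ (H.connectedComponentMk a).supp,
      ∀ x ∈ (H.connectedComponentMk a).supp, ∀ y, H.Adj x y → x = v ∨ y = v := by
  rcases hH.forall_adj_eq_or_exists_center h7 with hmatch | ⟨v, hv⟩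
  · refine ⟨a, rfl, fun x hx y hxy => ?_⟩
    rcases ConnectedComponent.eq_or_eq_of_mem_supp hmatch hab hx with rfl | rfl
    exacts [.inl rfl, .inr (hmatch hab.symm hxy).symm]
  · have hb : b ∈ (H.connectedComponentMk a).supp :=
      ConnectedComponent.sound hab.symm.reachable
    refine ⟨v, ?_, fun x _ y hxy => hv hxy⟩
    rcases hv hab with rfl | rfl
    exacts [rfl, hb]

end SimpleGraph

theorem GraphFree.p3UnionK2Free_induce_neighborSet {V : Type*} {G : SimpleGraph V}
    (hG : GraphFree H43 G) (u : V) : (G.induce (G.neighborSet u)).P3UnionK2Free := by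
  intro p q r x y hpq hqr hpr hxy
  by_contra! hne
  have hu : ∀ w : G.neighborSet u, G.Adj u w := fun w => w.2
  have : G.Adj p q := hpq; have : G.Adj q r := hqr; have : G.Adj x y := hxy
  -- `u p q r` is the 4-cycle and `u x y` the triangle of a copy of `H(4,3)`
  refine hG ⟨![u, p, q, r, x, y], fun i j hij => ?_, fun i j hij => ?_⟩
  · fin_cases i <;> fin_cases j <;> simp at hij ⊢ <;> grind [SimpleGraph.Adj.ne]
  · simp only [H43, SimpleGraph.fromEdgeSet_adj, Set.mem_insert_iff, Set.mem_singleton_iff]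
      at hij
    fin_cases i <;> fin_cases j <;> simp at hij ⊢ <;> grind [SimpleGraph.adj_comm]

theorem stmt_2_general {V : Type*} [Fintype V] (G : SimpleGraph V)
    (hfree : GraphFree H43 G) (u : V)
    (h7 : 7 ≤ (G.induce (G.neighborSet u)).edgeSet.ncard)
    (c : (G.induce (G.neighborSet u)).ConnectedComponent)
    (hc : ∃ a b, (G.induce (G.neighborSet u)).Adj a b ∧
      (G.induce (G.neighborSet u)).connectedComponentMk a = c) :
    ∃ r : ℕ, 1 ≤ r ∧
      Nonempty ((G.induce (G.neighborSet u)).induce c.supp ≃g starGraph r) := by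
  obtain ⟨a, b, hab, rfl⟩ := hc
  obtain ⟨v, hv, hcenter⟩ :=
    (hfree.p3UnionK2Free_induce_neighborSet u).exists_center_mem_supp h7 hab
  exact SimpleGraph.ConnectedComponent.exists_iso_starGraph hab rfl hv hcenter

/-- If `G` is `H(4,3)`-free and `G[N(u)]` has at least 7 edges, then every
non-trivial connected component of `G[N(u)]` is isomorphic to a star `K_{1,r}`, `r ≥ 1`. -/
theorem stmt_2 {V : Type*} [Fintype V] [DecidableEq V] (G : SimpleGraph V)
    (hfree : GraphFree H43 G) (u : V)
    (h7 : 7 ≤ (G.induce (G.neighborSet u)).edgeSet.ncard)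
    (c : (G.induce (G.neighborSet u)).ConnectedComponent)
    (hc : ∃ a b, (G.induce (G.neighborSet u)).Adj a b ∧
      (G.induce (G.neighborSet u)).connectedComponentMk a = c) :
    ∃ r : ℕ, 1 ≤ r ∧
      Nonempty ((G.induce (G.neighborSet u)).induce c.supp ≃g starGraph r) :=
  stmt_2_general G hfree u h7 c hc
end

section
/- Let G be a connected graph with Perron vector x = (x_1,…,x_n)ᵀ, where x_i corresponds to vertex v_i. Let u, v be two distinct vertices of G and suppose {v_1,…,v_s} ⊆ N(v)∖N(u). Let G* = G − {v v_i : 1 ≤ i ≤ s} + {u v_i : 1 ≤ i ≤ s} (delete the edges v v_i and add the edges u v_i). If x_u ≥ x_v, then λ(G) < λ(G*). -/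
open Finset

/-! Rotating the edges `v vᵢ` to `u vᵢ` changes the quadratic form of the adjacency matrix at `x`
by `2 (x_u - x_v) ∑ x_{vᵢ} ≥ 0`, so by the Rayleigh principle `λ(G) ≤ λ(G*)`. Equality would make
`x` a top eigenvector of `G*` for the same eigenvalue, but the row of `u` gains `∑ x_{vᵢ} > 0`. -/

open Matrix SimpleGraph

namespace Matrix.IsHermitian

variable {n : Type*} [Fintype n] [DecidableEq n] {A B : Matrix n n ℝ}

theorem posSemidef_sSup_spectrum_smul_one_sub (hA : A.IsHermitian) :
    (sSup (spectrum ℝ A) • (1 : Matrix n n ℝ) - A).PosSemidef := by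
  refine posSemidef_iff_isHermitian_and_spectrum_nonneg.mpr
    ⟨(isHermitian_one.smul (IsSelfAdjoint.all _)).sub hA, ?_⟩
  rw [← Algebra.algebraMap_eq_smul_one, ← spectrum.singleton_sub_eq]
  rintro _ ⟨c, rfl, μ, hμ, rfl⟩
  exact sub_nonneg.mpr (le_csSup A.finite_real_spectrum.bddAbove hμ)

theorem dotProduct_mulVec_le_sSup_spectrum_mul (hA : A.IsHermitian) (y : n → ℝ) :
    y ⬝ᵥ A *ᵥ y ≤ sSup (spectrum ℝ A) * (y ⬝ᵥ y) := by
  have := hA.posSemidef_sSup_spectrum_smul_one_sub.dotProduct_mulVec_nonneg y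
  simpa [sub_mulVec, smul_mulVec, dotProduct_sub] using this

theorem mulVec_eq_sSup_spectrum_smul (hA : A.IsHermitian) {y : n → ℝ}
    (hy : y ⬝ᵥ A *ᵥ y = sSup (spectrum ℝ A) * (y ⬝ᵥ y)) :
    A *ᵥ y = sSup (spectrum ℝ A) • y := by
  have := (hA.posSemidef_sSup_spectrum_smul_one_sub.dotProduct_mulVec_zero_iff y).mp (by
    simp [sub_mulVec, smul_mulVec, dotProduct_sub, hy])
  rw [sub_mulVec, smul_mulVec, one_mulVec, sub_eq_zero] at this
  exact this.symm

theorem lt_sSup_spectrum_of_dotProduct_mulVec_le (hB : B.IsHermitian) {x : n → ℝ} {c : ℝ}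
    (hAx : A *ᵥ x = c • x) (hxx : 0 < x ⬝ᵥ x) (hle : x ⬝ᵥ A *ᵥ x ≤ x ⬝ᵥ B *ᵥ x) {u : n}
    (hu : (A *ᵥ x) u < (B *ᵥ x) u) :
    c < sSup (spectrum ℝ B) := by
  have hBle := hB.dotProduct_mulVec_le_sSup_spectrum_mul x
  rw [hAx, dotProduct_smul, smul_eq_mul] at hle
  refine lt_of_le_of_ne (le_of_mul_le_mul_right (hle.trans hBle) hxx) fun hc => ?_
  have hBx := hB.mulVec_eq_sSup_spectrum_smul (le_antisymm hBle (hc ▸ hle))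
  rw [hAx, hBx, ← hc] at hu
  exact hu.false

end Matrix.IsHermitian

namespace SimpleGraph

variable {V : Type*}

theorem adjMatrix_sdiff_sup {α : Type*} [AddGroupWithOne α] {G R A : SimpleGraph V}
    [DecidableRel G.Adj] [DecidableRel R.Adj] [DecidableRel A.Adj]
    [DecidableRel ((G \ R) ⊔ A).Adj] (hR : R ≤ G) (hA : Disjoint G A) :
    adjMatrix α ((G \ R) ⊔ A) = adjMatrix α G - adjMatrix α R + adjMatrix α A := by
  ext a b
  have hRG := @hR a b
  have hAG := disjoint_left.mp hA a b
  simp only [adjMatrix_apply, sup_adj, sdiff_adj, Matrix.sub_apply, Matrix.add_apply]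
  by_cases hG : G.Adj a b <;> by_cases hR' : R.Adj a b <;> by_cases hA' : A.Adj a b <;>
    simp_all

def starFrom (w : V) (S : Finset V) : SimpleGraph V := fromRel fun a b => a = w ∧ b ∈ S

instance [DecidableEq V] (w : V) (S : Finset V) : DecidableRel (starFrom w S).Adj :=
  fun _ _ => inferInstanceAs (Decidable (_ ∧ _))

variable {w : V} {S : Finset V}

theorem starFrom_adj (hw : w ∉ S) {a b : V} :
    (starFrom w S).Adj a b ↔ (a = w ∧ b ∈ S) ∨ (b = w ∧ a ∈ S) := by
  simp only [starFrom, fromRel_adj, and_iff_right_iff_imp]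
  rintro (⟨rfl, hb⟩ | ⟨rfl, ha⟩) rfl <;> contradiction

theorem starFrom_le {G : SimpleGraph V} (h : ∀ s ∈ S, G.Adj w s) : starFrom w S ≤ G := by
  rintro a b ⟨-, ⟨rfl, hb⟩ | ⟨rfl, ha⟩⟩
  exacts [h b hb, (h a ha).symm]

theorem disjoint_starFrom {G : SimpleGraph V} (h : ∀ s ∈ S, ¬G.Adj w s) :
    Disjoint G (starFrom w S) := by
  refine disjoint_left.mpr ?_
  rintro a b hab ⟨-, ⟨rfl, hb⟩ | ⟨rfl, ha⟩⟩
  exacts [h b hb hab, h a ha hab.symm]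

theorem edgeSet_starFrom (hw : w ∉ S) :
    (starFrom w S).edgeSet = {e | ∃ s ∈ S, e = s(w, s)} := by
  ext e
  induction e using Sym2.ind with
  | _ a b =>
  simp only [mem_edgeSet, starFrom_adj hw, Set.mem_ofPred_eq, Sym2.eq_iff]
  grind

theorem fromEdgeSet_sdiff_starFrom_sup_starFrom (G : SimpleGraph V) {u v : V}
    (hu : u ∉ S) (hv : v ∉ S) :
    fromEdgeSet ((G.edgeSet \ {e | ∃ s ∈ S, e = s(v, s)}) ∪ {e | ∃ s ∈ S, e = s(u, s)}) =
      (G \ starFrom v S) ⊔ starFrom u S := by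
  rw [← edgeSet_starFrom hv, ← edgeSet_starFrom hu, ← edgeSet_sdiff, ← edgeSet_sup,
    fromEdgeSet_edgeSet]

variable [Fintype V] [DecidableEq V]

theorem adjMatrix_starFrom_mulVec_apply {α : Type*} [NonAssocSemiring α] (hw : w ∉ S)
    (x : V → α) (a : V) :
    (adjMatrix α (starFrom w S) *ᵥ x) a =
      (if a = w then ∑ s ∈ S, x s else 0) + (if a ∈ S then x w else 0) := by
  simp only [mulVec, dotProduct, adjMatrix_apply, ite_mul, one_mul, zero_mul, starFrom_adj hw]
  by_cases haw : a = w
  · subst haw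
    simp [hw, Finset.sum_ite_mem]
  · by_cases haS : a ∈ S <;> simp [haw, haS]

theorem dotProduct_adjMatrix_starFrom_mulVec {α : Type*} [CommSemiring α] (hw : w ∉ S)
    (x : V → α) : x ⬝ᵥ adjMatrix α (starFrom w S) *ᵥ x = 2 * x w * ∑ s ∈ S, x s := by
  simp only [dotProduct, adjMatrix_starFrom_mulVec_apply hw, mul_add, Finset.sum_add_distrib,
    mul_ite, mul_zero, Finset.sum_ite_eq', Finset.mem_univ, if_true, Finset.sum_ite_mem,
    Finset.univ_inter, ← Finset.sum_mul]
  ring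

end SimpleGraph

theorem specRad_eq_sSup_spectrum_adjMatrix {V : Type*} [Fintype V] [DecidableEq V]
    (G : SimpleGraph V) [DecidableRel G.Adj] :
    specRad G = sSup (spectrum ℝ (G.adjMatrix ℝ)) := by
  unfold specRad
  congr!

theorem stmt_3_general {V : Type*} [Fintype V] [DecidableEq V] (G : SimpleGraph V)
    [DecidableRel G.Adj]
    (x : V → ℝ) (hpos : ∀ v, 0 < x v)
    (heig : (SimpleGraph.adjMatrix ℝ G).mulVec x = specRad G • x)
    (u v : V) (huv : u ≠ v)
    (k : ℕ) (hk : 0 < k) (vs : Fin k → V)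
    (hvs : ∀ i, vs i ∈ G.neighborSet v \ G.neighborSet u)
    (hvu : ∀ i, vs i ≠ u)
    (hx : x v ≤ x u) :
    specRad G < specRad (SimpleGraph.fromEdgeSet
      ((G.edgeSet \ {e | ∃ i, e = s(v, vs i)}) ∪ {e | ∃ i, e = s(u, vs i)})) := by
  set S := univ.image vs
  have hmem {s : V} : s ∈ S ↔ ∃ i, vs i = s := by simp [S]
  have huS : u ∉ S := fun h => by obtain ⟨i, hi⟩ := hmem.mp h; exact hvu i hi
  have hvS : v ∉ S := fun h => by obtain ⟨i, hi⟩ := hmem.mp h; exact (hvs i).1.ne' hi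
  have hR : starFrom v S ≤ G := starFrom_le fun s hs => by
    obtain ⟨i, rfl⟩ := hmem.mp hs; exact (hvs i).1
  have hA : Disjoint G (starFrom u S) := disjoint_starFrom fun s hs => by
    obtain ⟨i, rfl⟩ := hmem.mp hs; exact (hvs i).2
  have hσ : 0 < ∑ s ∈ S, x s := sum_pos (fun s _ => hpos s)
    (univ_nonempty_iff.mpr (Fin.pos_iff_nonempty.mp hk) |>.image vs)
  have hrw (w : V) : {e | ∃ i, e = s(w, vs i)} = {e | ∃ s ∈ S, e = s(w, s)} := by
    ext e; simp [S]
  rw [hrw, hrw, fromEdgeSet_sdiff_starFrom_sup_starFrom G huS hvS,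
    specRad_eq_sSup_spectrum_adjMatrix, specRad_eq_sSup_spectrum_adjMatrix]
  rw [specRad_eq_sSup_spectrum_adjMatrix] at heig
  refine (isHermitian_adjMatrix _ _).lt_sSup_spectrum_of_dotProduct_mulVec_le heig
    (sum_pos (fun i _ => mul_pos (hpos i) (hpos i)) ⟨u, mem_univ u⟩) ?_ (u := u) ?_
  · rw [adjMatrix_sdiff_sup hR hA]
    simp only [sub_mulVec, add_mulVec, dotProduct_add, dotProduct_sub,
      dotProduct_adjMatrix_starFrom_mulVec hvS, dotProduct_adjMatrix_starFrom_mulVec huS]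
    nlinarith [mul_nonneg (sub_nonneg.mpr hx) hσ.le]
  · rw [adjMatrix_sdiff_sup hR hA]
    simp [sub_mulVec, add_mulVec, adjMatrix_starFrom_mulVec_apply hvS,
      adjMatrix_starFrom_mulVec_apply huS, huv, huS, hσ]

/-- Edge-rotation lemma. If `{v₁,…,v_k} ⊆ N(v) \ N(u)` and `x_u ≥ x_v` for the
Perron vector `x` of a connected graph `G`, then the graph `G*` obtained by replacing the
edges `v vᵢ` by `u vᵢ` satisfies `λ(G) < λ(G*)`. -/
theorem stmt_3 {V : Type*} [Fintype V] [DecidableEq V] (G : SimpleGraph V)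
    [DecidableRel G.Adj] (hconn : G.Connected)
    (x : V → ℝ) (hpos : ∀ v, 0 < x v) (hunit : ∑ v : V, x v ^ 2 = 1)
    (heig : (SimpleGraph.adjMatrix ℝ G).mulVec x = specRad G • x)
    (u v : V) (huv : u ≠ v)
    (k : ℕ) (hk : 0 < k) (vs : Fin k → V) (hinj : Function.Injective vs)
    (hvs : ∀ i, vs i ∈ G.neighborSet v \ G.neighborSet u)
    (hvu : ∀ i, vs i ≠ u)
    (hx : x v ≤ x u) :
    specRad G < specRad (SimpleGraph.fromEdgeSet
      ((G.edgeSet \ {e | ∃ i, e = s(v, vs i)}) ∪ {e | ∃ i, e = s(u, vs i)})) :=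
  stmt_3_general G x hpos heig u v huv k hk vs hvs hvu hx
end

section
/- Let G be a connected graph with m edges and Perron vector x, let u* be a vertex with maximum entry x_{u*}, U = N(u*), W = V(G)∖(U∪{u*}), U_0 = {u∈U : d_U(u)=0}, U_+ = U∖U_0. Suppose λ(G) > (1 + √(4m−5))/2 and there is a vertex v_j of G with x_j < (1−α)·x_{u*}, where 0 < α < 1. Then: if v_j ∈ W, then e(W) < e(U) − |U_+| + 3/2 − α·d_U(v_j); and if v_j ∈ U_+, then e(W) < e(U) − |U_+| + 3/2 − α·(d_U(v_j) − 1). -/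
open Finset

/-! Writing `λ² x_{u*} = ∑_{u ∈ U} ∑_{w ∼ u} x_w` as a sum over `w` and subtracting
`λ x_{u*} = ∑_{u ∈ U} x_u` gives
`(λ² - λ) x_{u*} = |U| x_{u*} + ∑_{v ∈ U} (d_U(v) - 1) x_v + ∑_{w ∈ W} d_U(w) x_w`.
The terms over `U₀` are negative; bounding every other `x_v` by `x_{u*}`, except `x_j`, which
is smaller than `(1 - α) x_{u*}`, and counting `m = |U| + e(U) + e(W) + ∑_{w ∈ W} d_U(w)` gives
`λ² - λ ≤ m - e(W) + e(U) - |U₊| - α c_j`, where `c_j = d_U(j) - [j ∈ U]` is the coefficient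
of `x_j` above. The bound on `λ` says precisely that `λ² - λ > m - 3/2`. -/

lemma sub_three_halves_lt_sq_sub_self {a ρ : ℝ} (h : (1 + √(4 * a - 5)) / 2 < ρ) :
    a - 3 / 2 < ρ ^ 2 - ρ := by
  have hs : 4 * a - 5 ≤ √(4 * a - 5) ^ 2 := Real.sq_sqrt' ▸ le_max_left _ _
  nlinarith [Real.sqrt_nonneg (4 * a - 5)]

namespace Finset

lemma sum_mul_le_sum_mul_sub {ι : Type*} {T : Finset ι} {c x : ι → ℝ} {M : ℝ}
    (hc : ∀ i ∈ T, 0 ≤ c i) (hx : ∀ i ∈ T, x i ≤ M) {j : ι} (hj : j ∈ T) :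
    ∑ i ∈ T, c i * x i ≤ (∑ i ∈ T, c i) * M - c j * (M - x j) := by
  have := single_le_sum (f := fun i => c i * (M - x i))
    (fun i hi => mul_nonneg (hc i hi) (sub_nonneg.2 (hx i hi))) hj
  simp only [mul_sub, sum_sub_distrib, sum_mul] at this ⊢
  linarith

lemma sum_sub_one_mul_le_sum_filter {ι : Type*} (S : Finset ι) (d : ι → ℕ) {x : ι → ℝ}
    (hx : ∀ i ∈ S, 0 ≤ x i) :
    ∑ i ∈ S, ((d i : ℝ) - 1) * x i ≤ ∑ i ∈ S with d i ≠ 0, ((d i : ℝ) - 1) * x i := by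
  rw [← sum_filter_add_sum_filter_not S (fun i => d i ≠ 0)]
  refine add_le_of_nonpos_right (sum_nonpos fun i hi => ?_)
  obtain ⟨hiS, hdi⟩ := mem_filter.1 hi
  simp [not_not.1 hdi, hx i hiS]

end Finset

namespace SimpleGraph

variable {V : Type*} [Fintype V] (G : SimpleGraph V) [DecidableRel G.Adj]

lemma sum_neighborFinset_eq_of_mulVec_eq {x : V → ℝ} {ρ : ℝ}
    (h : (G.adjMatrix ℝ).mulVec x = ρ • x) (v : V) : ∑ w ∈ G.neighborFinset v, x w = ρ * x v := by
  simpa [adjMatrix_mulVec_apply] using congrFun h v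

variable [DecidableEq V]

lemma card_inter_neighborFinset (S : Finset V) (v : V) :
    #(S ∩ G.neighborFinset v) = ∑ w ∈ S, if G.Adj v w then 1 else 0 := by
  rw [Finset.sum_boole, Nat.cast_id, ← Finset.filter_mem_eq_inter]
  simp [neighborFinset_eq_filter]

lemma sum_card_inter_neighborFinset_comm (S T : Finset V) :
    ∑ v ∈ S, #(T ∩ G.neighborFinset v) = ∑ w ∈ T, #(S ∩ G.neighborFinset w) := by
  simp_rw [card_inter_neighborFinset]
  rw [Finset.sum_comm]
  simp_rw [adj_comm]

lemma sum_sum_neighborFinset {M : Type*} [AddCommMonoid M] (S : Finset V) (f : V → M) :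
    ∑ v ∈ S, ∑ w ∈ G.neighborFinset v, f w = ∑ w, #(S ∩ G.neighborFinset w) • f w := by
  simp_rw [neighborFinset_eq_filter, Finset.sum_filter]
  rw [Finset.sum_comm]
  refine Finset.sum_congr rfl fun w _ => ?_
  rw [← Finset.sum_filter, Finset.sum_const, Finset.filter_mem_eq_inter.symm]
  congr 2
  ext v
  simp [adj_comm]

def nonNeighborFinset (u : V) : Finset V := univ \ insert u (G.neighborFinset u)

def triangleNeighborFinset (u : V) : Finset V :=
  {v ∈ G.neighborFinset u | #(G.neighborFinset u ∩ G.neighborFinset v) ≠ 0}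

lemma notMem_neighborFinset_of_mem_nonNeighborFinset {u w : V}
    (hw : w ∈ G.nonNeighborFinset u) : w ∉ G.neighborFinset u := by
  simp_all [nonNeighborFinset]

lemma disjoint_insert_nonNeighborFinset (u : V) :
    Disjoint (insert u (G.neighborFinset u)) (G.nonNeighborFinset u) :=
  Finset.disjoint_sdiff

lemma insert_union_nonNeighborFinset (u : V) :
    insert u (G.neighborFinset u) ∪ G.nonNeighborFinset u = univ :=
  Finset.union_sdiff_of_subset (Finset.subset_univ _)

lemma sum_eq_add_sum_neighborFinset_add_sum_nonNeighborFinset {M : Type*} [AddCommMonoid M]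
    (u : V) (f : V → M) :
    ∑ v, f v = f u + ∑ v ∈ G.neighborFinset u, f v + ∑ v ∈ G.nonNeighborFinset u, f v := by
  rw [← G.insert_union_nonNeighborFinset u,
    Finset.sum_union (G.disjoint_insert_nonNeighborFinset u), Finset.sum_insert (by simp)]

lemma sq_sub_self_mul_eq_of_mulVec_eq {x : V → ℝ} {ρ : ℝ}
    (h : (G.adjMatrix ℝ).mulVec x = ρ • x) (u : V) :
    (ρ ^ 2 - ρ) * x u = #(G.neighborFinset u) * x u
      + ∑ v ∈ G.neighborFinset u, ((#(G.neighborFinset u ∩ G.neighborFinset v) : ℝ) - 1) * x v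
      + ∑ w ∈ G.nonNeighborFinset u, (#(G.neighborFinset u ∩ G.neighborFinset w) : ℝ) * x w := by
  have heig := G.sum_neighborFinset_eq_of_mulVec_eq h
  have hsq : ρ ^ 2 * x u = ∑ w, (#(G.neighborFinset u ∩ G.neighborFinset w) : ℝ) * x w := by
    rw [sq, mul_assoc, ← heig u, Finset.mul_sum, Finset.sum_congr rfl fun v _ => (heig v).symm,
      G.sum_sum_neighborFinset]
    simp only [nsmul_eq_mul]
  rw [sub_mul, hsq, G.sum_eq_add_sum_neighborFinset_add_sum_nonNeighborFinset u, ← heig u,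
    Finset.inter_self]
  simp only [sub_one_mul, Finset.sum_sub_distrib]
  ring

lemma card_inter_neighborFinset_sub_ite_nonneg {u v : V}
    (hv : v ∈ G.triangleNeighborFinset u ∪ G.nonNeighborFinset u) :
    0 ≤ (#(G.neighborFinset u ∩ G.neighborFinset v) : ℝ)
      - if v ∈ G.neighborFinset u then 1 else 0 := by
  rcases Finset.mem_union.1 hv with hv | hv
  · obtain ⟨hvU, hd⟩ := Finset.mem_filter.1 hv
    rw [if_pos hvU, sub_nonneg, Nat.one_le_cast, Nat.one_le_iff_ne_zero]
    exact hd
  · rw [if_neg (G.notMem_neighborFinset_of_mem_nonNeighborFinset hv), sub_zero]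
    exact Nat.cast_nonneg _

lemma sum_triangleNeighborFinset_add_sum_nonNeighborFinset_le {x : V → ℝ} {u : V}
    (hmax : ∀ v, x v ≤ x u) {j : V}
    (hj : j ∈ G.triangleNeighborFinset u ∪ G.nonNeighborFinset u) :
    ∑ v ∈ G.triangleNeighborFinset u,
        ((#(G.neighborFinset u ∩ G.neighborFinset v) : ℝ) - 1) * x v
      + ∑ w ∈ G.nonNeighborFinset u, (#(G.neighborFinset u ∩ G.neighborFinset w) : ℝ) * x w
      ≤ (∑ v ∈ G.triangleNeighborFinset u, ((#(G.neighborFinset u ∩ G.neighborFinset v) : ℝ) - 1)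
          + ∑ w ∈ G.nonNeighborFinset u, (#(G.neighborFinset u ∩ G.neighborFinset w) : ℝ)) * x u
        - ((#(G.neighborFinset u ∩ G.neighborFinset j) : ℝ)
            - if j ∈ G.neighborFinset u then 1 else 0) * (x u - x j) := by
  set d : V → ℝ := fun v => #(G.neighborFinset u ∩ G.neighborFinset v)
  set c : V → ℝ := fun v => d v - if v ∈ G.neighborFinset u then 1 else 0
  have hU : ∀ v ∈ G.triangleNeighborFinset u, d v - 1 = c v := fun v hv => by
    simp only [c, if_pos (Finset.mem_filter.1 hv).1]
  have hW : ∀ w ∈ G.nonNeighborFinset u, d w = c w := fun w hw => by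
    simp only [c, if_neg (G.notMem_neighborFinset_of_mem_nonNeighborFinset hw), sub_zero]
  have hdisj : Disjoint (G.triangleNeighborFinset u) (G.nonNeighborFinset u) :=
    (G.disjoint_insert_nonNeighborFinset u).mono_left
      ((Finset.filter_subset _ _).trans (Finset.subset_insert _ _))
  have hc : ∀ v ∈ G.triangleNeighborFinset u ∪ G.nonNeighborFinset u, 0 ≤ c v :=
    fun v hv => G.card_inter_neighborFinset_sub_ite_nonneg hv
  calc _ = ∑ v ∈ G.triangleNeighborFinset u ∪ G.nonNeighborFinset u, c v * x v := by
        rw [Finset.sum_union hdisj]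
        congr 1
        · exact Finset.sum_congr rfl fun v hv => congrArg (· * x v) (hU v hv)
        · exact Finset.sum_congr rfl fun w hw => congrArg (· * x w) (hW w hw)
    _ ≤ (∑ v ∈ G.triangleNeighborFinset u ∪ G.nonNeighborFinset u, c v) * x u
          - c j * (x u - x j) := Finset.sum_mul_le_sum_mul_sub hc (fun v _ => hmax v) hj
    _ = _ := by rw [Finset.sum_union hdisj, ← Finset.sum_congr rfl hU, ← Finset.sum_congr rfl hW]

end SimpleGraph

section EdgeCounts

open SimpleGraph

variable {V : Type*} (G : SimpleGraph V)

lemma eIn_univ : eIn G Set.univ = G.edgeSet.ncard := by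
  simp [eIn]

variable [Fintype V] [DecidableRel G.Adj]

lemma Uset_eq_coe_neighborFinset (u : V) : Uset G u = ↑(G.neighborFinset u) := by
  simp [Uset]

variable [DecidableEq V]

lemma Wset_eq_coe_nonNeighborFinset (u : V) : Wset G u = ↑(G.nonNeighborFinset u) := by
  ext v
  simp [Wset, nonNeighborFinset]

lemma dIn_coe_finset (S : Finset V) (v : V) : dIn G ↑S v = #(S ∩ G.neighborFinset v) := by
  rw [dIn, ← Set.ncard_coe_finset]
  simp

lemma Uplusset_eq_coe_triangleNeighborFinset (u : V) :
    Uplusset G u = ↑(G.triangleNeighborFinset u) := by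
  ext v
  simp [Uplusset, triangleNeighborFinset, ← dIn_coe_finset]

lemma two_mul_eIn_coe_finset (S : Finset V) :
    2 * eIn G ↑S = ∑ v ∈ S, #(S ∩ G.neighborFinset v) := by
  classical
  set H := (G.induce ↑S).spanningCoe
  have hadj : ∀ a b, H.Adj a b ↔ G.Adj a b ∧ a ∈ S ∧ b ∈ S := by
    simp [H]
  have hedges : eIn G ↑S = #H.edgeFinset := by
    rw [eIn, ← Set.ncard_coe_finset, coe_edgeFinset]
    congr 1
    ext e
    induction e with
    | h a b => simp [hadj]
  have hdeg : ∀ v, H.degree v = if v ∈ S then #(S ∩ G.neighborFinset v) else 0 := by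
    intro v
    rw [← card_neighborFinset_eq_degree]
    split_ifs with hv
    · congr 1; ext w; simp [hadj, hv, and_comm]
    · rw [Finset.card_eq_zero, Finset.eq_empty_iff_forall_notMem]
      simp [hadj, hv]
  rw [hedges, ← sum_degrees_eq_twice_card_edges, Finset.sum_congr rfl fun v _ => hdeg v,
    Finset.sum_ite_mem, Finset.univ_inter]

lemma eIn_union {A B : Finset V} (h : Disjoint A B) :
    eIn G ↑(A ∪ B) = eIn G ↑A + eIn G ↑B + ∑ w ∈ B, #(A ∩ G.neighborFinset w) := by
  have hA := two_mul_eIn_coe_finset G A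
  have hB := two_mul_eIn_coe_finset G B
  have hAB := two_mul_eIn_coe_finset G (A ∪ B)
  have hcomm := G.sum_card_inter_neighborFinset_comm A B
  simp_rw [Finset.sum_union h, Finset.union_inter_distrib_right,
    Finset.card_union_of_disjoint (h.mono Finset.inter_subset_left Finset.inter_subset_left),
    Finset.sum_add_distrib] at hAB
  omega

lemma eIn_singleton (v : V) : eIn G ↑({v} : Finset V) = 0 := by
  have := two_mul_eIn_coe_finset G {v}
  simp_all

lemma ncard_edgeSet_eq_card_neighborFinset_add_eIn (u : V) :
    G.edgeSet.ncard = #(G.neighborFinset u) + eIn G ↑(G.neighborFinset u)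
      + eIn G ↑(G.nonNeighborFinset u)
      + ∑ w ∈ G.nonNeighborFinset u, #(G.neighborFinset u ∩ G.neighborFinset w) := by
  have hball : eIn G ↑(insert u (G.neighborFinset u)) =
      eIn G ↑(G.neighborFinset u) + #(G.neighborFinset u) := by
    rw [Finset.insert_eq, eIn_union G (by simp), eIn_singleton, zero_add,
      Finset.sum_congr rfl fun v hv => ?_, Finset.card_eq_sum_ones]
    rw [Finset.singleton_inter_of_mem (by simpa [adj_comm] using hv), Finset.card_singleton]
  rw [← eIn_univ, ← Finset.coe_univ, ← G.insert_union_nonNeighborFinset u,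
    eIn_union G (G.disjoint_insert_nonNeighborFinset u), hball]
  rw [Finset.sum_congr rfl fun w hw => by
    rw [Finset.insert_inter_of_notMem (by
      simpa [adj_comm] using G.notMem_neighborFinset_of_mem_nonNeighborFinset hw)]]
  ring

lemma sum_triangleNeighborFinset_sub_one (u : V) :
    ∑ v ∈ G.triangleNeighborFinset u, ((#(G.neighborFinset u ∩ G.neighborFinset v) : ℝ) - 1)
      = 2 * eIn G ↑(G.neighborFinset u) - #(G.triangleNeighborFinset u) := by
  rw [Finset.sum_sub_distrib, Finset.sum_const, nsmul_one, ← Nat.cast_sum, triangleNeighborFinset,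
    Finset.sum_filter_ne_zero, ← two_mul_eIn_coe_finset]
  push_cast
  ring

lemma eIn_nonNeighborFinset_lt {x : V → ℝ} {ρ : ℝ} (h : (G.adjMatrix ℝ).mulVec x = ρ • x)
    (hx : ∀ v, 0 ≤ x v) {u : V} (hu : 0 < x u) (hmax : ∀ v, x v ≤ x u)
    (hlam : (1 + √(4 * (G.edgeSet.ncard : ℝ) - 5)) / 2 < ρ) {α : ℝ} {j : V}
    (hj : x j < (1 - α) * x u) (hjT : j ∈ G.triangleNeighborFinset u ∪ G.nonNeighborFinset u) :
    (eIn G ↑(G.nonNeighborFinset u) : ℝ) <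
      eIn G ↑(G.neighborFinset u) - #(G.triangleNeighborFinset u) + 3 / 2
        - α * ((#(G.neighborFinset u ∩ G.neighborFinset j) : ℝ)
            - if j ∈ G.neighborFinset u then 1 else 0) := by
  have hgap := mul_lt_mul_of_pos_right (sub_three_halves_lt_sq_sub_self hlam) hu
  have hm := congrArg (fun n : ℕ => (n : ℝ) * x u)
    (ncard_edgeSet_eq_card_neighborFinset_add_eIn G u)
  simp only [Nat.cast_add, Nat.cast_sum] at hm
  have hU : ∑ v ∈ G.neighborFinset u, ((#(G.neighborFinset u ∩ G.neighborFinset v) : ℝ) - 1) * x v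
      ≤ ∑ v ∈ G.triangleNeighborFinset u,
          ((#(G.neighborFinset u ∩ G.neighborFinset v) : ℝ) - 1) * x v :=
    Finset.sum_sub_one_mul_le_sum_filter _ _ fun v _ => hx v
  have hT := G.sum_triangleNeighborFinset_add_sum_nonNeighborFinset_le hmax hjT
  rw [sum_triangleNeighborFinset_sub_one] at hT
  have hdef := mul_le_mul_of_nonneg_left hj.le (G.card_inter_neighborFinset_sub_ite_nonneg hjT)
  have key : ((eIn G ↑(G.nonNeighborFinset u) : ℝ) -
      (eIn G ↑(G.neighborFinset u) - #(G.triangleNeighborFinset u) + 3 / 2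
        - α * ((#(G.neighborFinset u ∩ G.neighborFinset j) : ℝ)
            - if j ∈ G.neighborFinset u then 1 else 0))) * x u < 0 := by
    rw [G.sq_sub_self_mul_eq_of_mulVec_eq h u] at hgap
    linarith
  linarith [neg_of_mul_neg_left key hu.le]

end EdgeCounts

theorem stmt_4_general {V : Type*} [Fintype V] [DecidableEq V] (G : SimpleGraph V)
    [DecidableRel G.Adj]
    (m : ℕ) (hm : G.edgeSet.ncard = m)
    (x : V → ℝ) (hpos : ∀ v, 0 < x v)
    (heig : (SimpleGraph.adjMatrix ℝ G).mulVec x = specRad G • x)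
    (ustar : V) (hmaxx : ∀ v, x v ≤ x ustar)
    (α : ℝ)
    (vj : V) (hvj : x vj < (1 - α) * x ustar)
    (hlam : (1 + Real.sqrt (4 * (m : ℝ) - 5)) / 2 < specRad G) :
    (vj ∈ Wset G ustar →
      (eIn G (Wset G ustar) : ℝ) <
        (eIn G (Uset G ustar) : ℝ) - ((Uplusset G ustar).ncard : ℝ) + 3 / 2
          - α * (dIn G (Uset G ustar) vj : ℝ)) ∧
    (vj ∈ Uplusset G ustar →
      (eIn G (Wset G ustar) : ℝ) <
        (eIn G (Uset G ustar) : ℝ) - ((Uplusset G ustar).ncard : ℝ) + 3 / 2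
          - α * ((dIn G (Uset G ustar) vj : ℝ) - 1)) := by
  subst hm
  have key := fun hj => eIn_nonNeighborFinset_lt G heig (fun v => (hpos v).le) (hpos ustar) hmaxx
    hlam hvj hj
  rw [Wset_eq_coe_nonNeighborFinset, Uset_eq_coe_neighborFinset,
    Uplusset_eq_coe_triangleNeighborFinset, Set.ncard_coe_finset, dIn_coe_finset]
  simp only [Finset.mem_coe]
  refine ⟨fun hj => ?_, fun hj => ?_⟩
  · simpa only [if_neg (G.notMem_neighborFinset_of_mem_nonNeighborFinset hj), sub_zero]
      using key (Finset.mem_union_right _ hj)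
  · simpa only [if_pos (Finset.mem_filter.1 hj).1] using key (Finset.mem_union_left _ hj)

/-- If `λ(G) > (1 + √(4m-5))/2` and `x_j < (1-α)x_{u*}` with `0 < α < 1`, then
`e(W) < e(U) - |U₊| + 3/2 - α·d_U(v_j)` for `v_j ∈ W`, and
`e(W) < e(U) - |U₊| + 3/2 - α·(d_U(v_j) - 1)` for `v_j ∈ U₊`. -/
theorem stmt_4 {V : Type*} [Fintype V] [DecidableEq V] (G : SimpleGraph V)
    [DecidableRel G.Adj] (hconn : G.Connected)
    (m : ℕ) (hm : G.edgeSet.ncard = m)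
    (x : V → ℝ) (hpos : ∀ v, 0 < x v) (hunit : ∑ v : V, x v ^ 2 = 1)
    (heig : (SimpleGraph.adjMatrix ℝ G).mulVec x = specRad G • x)
    (ustar : V) (hmaxx : ∀ v, x v ≤ x ustar)
    (α : ℝ) (hα0 : 0 < α) (hα1 : α < 1)
    (vj : V) (hvj : x vj < (1 - α) * x ustar)
    (hlam : (1 + Real.sqrt (4 * (m : ℝ) - 5)) / 2 < specRad G) :
    (vj ∈ Wset G ustar →
      (eIn G (Wset G ustar) : ℝ) <
        (eIn G (Uset G ustar) : ℝ) - ((Uplusset G ustar).ncard : ℝ) + 3 / 2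
          - α * (dIn G (Uset G ustar) vj : ℝ)) ∧
    (vj ∈ Uplusset G ustar →
      (eIn G (Wset G ustar) : ℝ) <
        (eIn G (Uset G ustar) : ℝ) - ((Uplusset G ustar).ncard : ℝ) + 3 / 2
          - α * ((dIn G (Uset G ustar) vj : ℝ) - 1)) :=
  stmt_4_general G m hm x hpos heig ustar hmaxx α vj hvj hlam
end

section
/- Let m be an odd integer with m ≥ 58 and let Ĝ be a connected graph attaining the maximum spectral radius among all graphs in 𝒢(m,H(4,3)) other than K_2 ∨ ((m−1)/2)K_1. Let x be the Perron vector of Ĝ, u* a vertex of maximum entry, U = N(u*), and U_+ = {u∈U : u has at least one neighbor in U}. If λ(Ĝ) > (1 + √(4m−7))/2, then the induced subgraph Ĝ[U_+] contains at least 7 edges. -/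
open Finset

/-!
Counting walks of length two from the vertex `u*` of maximum Perron entry gives
`λ² x(u*) = ∑_{v ∈ U} ∑_{w ∼ v} x(w) ≤ (∑_{v ∈ U} d(v)) x(u*)`, and `∑_{v ∈ U} d(v) ≤ m + e(U)`
since only the edges inside `U` are counted twice. On the other hand
`λ > (1 + √(4m - 7))/2` means `λ² - λ > m - 2`, and `λ > 8` once `m ≥ 58`, so `e(U) > 6`.
Finally every edge inside `U` has both ends in `U₊`, so `e(U₊) = e(U)`.
-/

theorem sub_two_lt_sq_sub_self_of_lt {r μ : ℝ} (h : (1 + √(4 * r - 7)) / 2 < μ) :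
    r - 2 < μ ^ 2 - μ := by
  have hsq := Real.sq_sqrt' (x := 4 * r - 7)
  have hs := Real.sqrt_nonneg (4 * r - 7)
  nlinarith [le_max_left (4 * r - 7) 0, mul_pos (by linarith : (0 : ℝ) < 2 * μ - 1 - √(4 * r - 7))
    (by linarith : (0 : ℝ) < 2 * μ - 1 + √(4 * r - 7))]

namespace SimpleGraph

variable {V : Type*}

theorem card_filter_mem_le_one_add [DecidableEq V] (S : Finset V) (e : Sym2 V) :
    #(S.filter (· ∈ e)) ≤ 1 + if e ∈ S.sym2 then 1 else 0 := by
  induction e using Sym2.ind with | _ a b =>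
  have hsub : S.filter (· ∈ s(a, b)) ⊆ {a, b} := fun v hv => by
    simpa using (mem_filter.1 hv).2
  split_ifs with hin
  · exact (card_le_card hsub).trans card_le_two
  · rw [mem_sym2_iff] at hin
    push Not at hin
    obtain ⟨v, hv, hvS⟩ := hin
    have hv' : v ∈ ({a, b} : Finset V) := by simpa using hv
    have hsub' : S.filter (· ∈ s(a, b)) ⊆ ({a, b} : Finset V).erase v := fun w hw =>
      mem_erase.2 ⟨fun hwv => hvS (hwv ▸ (mem_filter.1 hw).1), hsub hw⟩
    have := card_erase_of_mem hv'
    have : #({a, b} : Finset V) ≤ 2 := card_le_two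
    have := card_le_card hsub'
    omega

theorem mem_Uplusset_of_adj [Finite V] {G : SimpleGraph V} {u a b : V} (hab : G.Adj a b)
    (ha : a ∈ G.neighborSet u) (hb : b ∈ G.neighborSet u) : a ∈ Uplusset G u :=
  ⟨ha, ((Set.ncard_pos (Set.toFinite _)).2
    (⟨b, hb, hab⟩ : (G.neighborSet u ∩ G.neighborSet a).Nonempty)).ne'⟩

theorem eIn_Uplusset [Finite V] (G : SimpleGraph V) (u : V) :
    eIn G (Uplusset G u) = eIn G (G.neighborSet u) := by
  unfold eIn
  congr 1
  ext e
  induction e using Sym2.ind with | _ a b =>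
  refine ⟨fun ⟨hab, h⟩ => ⟨hab, fun v hv => (h v hv).1⟩, fun ⟨hab, h⟩ => ⟨hab, fun v hv => ?_⟩⟩
  have ha := h a (Sym2.mem_mk_left a b)
  have hb := h b (Sym2.mem_mk_right a b)
  rcases Sym2.mem_iff.1 hv with rfl | rfl
  exacts [mem_Uplusset_of_adj hab ha hb, mem_Uplusset_of_adj hab.symm hb ha]

variable [Fintype V] (G : SimpleGraph V) [DecidableRel G.Adj]

theorem eIn_coe_eq_card_inter_sym2 [DecidableEq V] (S : Finset V) :
    eIn G S = #(G.edgeFinset ∩ S.sym2) := by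
  rw [eIn, ← Set.ncard_coe_finset]
  congr 1
  ext e
  simp only [Set.mem_ofPred_eq, mem_coe, mem_inter, mem_edgeFinset, mem_sym2_iff]

theorem sum_degree_le_card_edgeFinset_add [DecidableEq V] (S : Finset V) :
    ∑ v ∈ S, G.degree v ≤ #G.edgeFinset + #(G.edgeFinset ∩ S.sym2) := by
  calc ∑ v ∈ S, G.degree v
      = ∑ v ∈ S, ∑ e ∈ G.edgeFinset, if v ∈ e then 1 else 0 := by
        refine sum_congr rfl fun v _ => ?_
        rw [← card_incidenceFinset_eq_degree, incidenceFinset_eq_filter, card_filter]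
    _ = ∑ e ∈ G.edgeFinset, #(S.filter (· ∈ e)) := by
        rw [sum_comm]
        exact sum_congr rfl fun e _ => (card_filter _ _).symm
    _ ≤ ∑ e ∈ G.edgeFinset, (1 + if e ∈ S.sym2 then 1 else 0) :=
        sum_le_sum fun e _ => card_filter_mem_le_one_add S e
    _ = #G.edgeFinset + #(G.edgeFinset ∩ S.sym2) := by
        rw [sum_add_distrib, card_eq_sum_ones, sum_boole, Nat.cast_id, filter_mem_eq_inter]

variable {G} {x : V → ℝ} {μ : ℝ}

theorem sum_neighborFinset_of_mulVec_eq (heig : (G.adjMatrix ℝ).mulVec x = μ • x) (v : V) :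
    ∑ w ∈ G.neighborFinset v, x w = μ * x v := by
  simpa [adjMatrix_mulVec_apply] using congrFun heig v

theorem sq_le_sum_degree_of_mulVec_eq (heig : (G.adjMatrix ℝ).mulVec x = μ • x) {u : V}
    (hu : 0 < x u) (hmax : ∀ v, x v ≤ x u) :
    μ ^ 2 ≤ ∑ v ∈ G.neighborFinset u, (G.degree v : ℝ) := by
  refine le_of_mul_le_mul_right ?_ hu
  calc μ ^ 2 * x u
      = ∑ v ∈ G.neighborFinset u, ∑ w ∈ G.neighborFinset v, x w := by
        simp only [sq, mul_assoc, ← sum_neighborFinset_of_mulVec_eq heig, mul_sum]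
    _ ≤ ∑ v ∈ G.neighborFinset u, (G.degree v : ℝ) * x u := by
        refine sum_le_sum fun v _ => ?_
        simpa using sum_le_card_nsmul (G.neighborFinset v) x (x u) fun w _ => hmax w
    _ = (∑ v ∈ G.neighborFinset u, (G.degree v : ℝ)) * x u := (sum_mul ..).symm

end SimpleGraph

theorem stmt_6_general {V : Type*} [Fintype V] [DecidableEq V] (m : ℕ) (hm : 58 ≤ m)
    (Ghat : SimpleGraph V) [DecidableRel Ghat.Adj]
    (hext : isExtremal m Ghat)
    (x : V → ℝ) (hpos : ∀ v, 0 < x v)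
    (heig : (SimpleGraph.adjMatrix ℝ Ghat).mulVec x = specRad Ghat • x)
    (ustar : V) (hmaxx : ∀ v, x v ≤ x ustar)
    (hlam : (1 + Real.sqrt (4 * (m : ℝ) - 7)) / 2 < specRad Ghat) :
    7 ≤ eIn Ghat (Uplusset Ghat ustar) := by
  have h15 : (15 : ℝ) ≤ √(4 * (m : ℝ) - 7) := by
    have : (58 : ℝ) ≤ m := by exact_mod_cast hm
    exact (Real.le_sqrt' (by norm_num)).2 (by linarith)
  have hgap := sub_two_lt_sq_sub_self_of_lt hlam
  have hwalks := Ghat.sq_le_sum_degree_of_mulVec_eq heig (hpos ustar) hmaxx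
  have hcount := Ghat.sum_degree_le_card_edgeFinset_add (Ghat.neighborFinset ustar)
  have hedges : #Ghat.edgeFinset = m := by
    rw [← Set.ncard_coe_finset, SimpleGraph.coe_edgeFinset]
    exact hext.1.2.1
  rw [hedges] at hcount
  rw [SimpleGraph.eIn_Uplusset, ← SimpleGraph.coe_neighborFinset,
    SimpleGraph.eIn_coe_eq_card_inter_sym2]
  have hcount_real : ∑ v ∈ Ghat.neighborFinset ustar, (Ghat.degree v : ℝ)
      ≤ m + #(Ghat.edgeFinset ∩ (Ghat.neighborFinset ustar).sym2) := by exact_mod_cast hcount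
  have : (6 : ℝ) < #(Ghat.edgeFinset ∩ (Ghat.neighborFinset ustar).sym2) := by linarith
  exact_mod_cast this

/-- For odd `m ≥ 58`, if `Ĝ` is a connected spectral-extremal graph in
`𝒢(m,H(4,3)) \ {K₂ ∨ ((m-1)/2)K₁}` and `λ(Ĝ) > (1 + √(4m-7))/2`, then `Ĝ[U₊]` has at
least 7 edges. -/
theorem stmt_6 {V : Type*} [Fintype V] [DecidableEq V] (m : ℕ) (hm : 58 ≤ m) (hodd : Odd m)
    (Ghat : SimpleGraph V) [DecidableRel Ghat.Adj] (hconn : Ghat.Connected)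
    (hext : isExtremal m Ghat)
    (x : V → ℝ) (hpos : ∀ v, 0 < x v) (hunit : ∑ v : V, x v ^ 2 = 1)
    (heig : (SimpleGraph.adjMatrix ℝ Ghat).mulVec x = specRad Ghat • x)
    (ustar : V) (hmaxx : ∀ v, x v ≤ x ustar)
    (hlam : (1 + Real.sqrt (4 * (m : ℝ) - 7)) / 2 < specRad Ghat) :
    7 ≤ eIn Ghat (Uplusset Ghat ustar) :=
  stmt_6_general m hm Ghat hext x hpos heig ustar hmaxx hlam
end

section
/- Let m be an odd integer with m ≥ 58 and let Ĝ be a connected graph attaining the maximum spectral radius among all graphs in 𝒢(m,H(4,3)) other than K_2 ∨ ((m−1)/2)K_1, and suppose additionally that Ĝ is not isomorphic to K_1 ∨ (K_{1,(m−3)/2} ∪ 2K_1). Let u* be a vertex of maximum Perron-vector entry, U = N(u*), and W = V(Ĝ)∖(U∪{u*}). If λ(Ĝ) > (1 + √(4m−7))/2, then W = ∅. -/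
open Finset

/-!
Write `U = N(u*)`, `W` for the remaining vertices and `d_S(v) = |S ∩ N(v)|`. Counting walks
of length two from `u*` gives `λ² x(u*) = d(u*) x(u*) + Σ_U d_U(v) x(v) + Σ_W d_U(w) x(w)`, hence
`λ² ≤ d(u*) + 2e(U) + e(U,W)`; together with `λ² - λ > m - 2` and `λ > 8` this forces
`2e(U) ≥ 2e(W) + 13`. As `Ĝ` is `H(4,3)`-free, `Ĝ[U]` contains no `P₃ ∪ K₂`, so it is a star,
a matching, or has at most six edges. The last case contradicts the bound, and for a matching the
walk identity gives `λ² - λ ≤ d(u*) + e(U,W)`, which is too small. If `Ĝ[U]` is a star with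
centre `z`, the walk identity first gives `e(W) = 0`; every vertex of `W` then has one or two
neighbours, all in `U`, and multiplying the identity by `λ` yields
`λ (e(U,W) - 1) < 3 e(U,W) - 2|W| - |U₀|`, where `U₀` is the set of isolated vertices of `Ĝ[U]`.
With `λ > 8` and `W ≠ ∅` this forces `e(U,W) = 1` and `U₀ = ∅`, so `m = 2 + 2 d_U(z)` is even.
-/

lemma eight_lt_of_one_add_sqrt_div_two_lt {m : ℕ} {ρ : ℝ} (hm : 58 ≤ m)
    (h : (1 + Real.sqrt (4 * (m : ℝ) - 7)) / 2 < ρ) : 8 < ρ := by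
  have hm' : (58 : ℝ) ≤ m := by exact_mod_cast hm
  have : (15 : ℝ) ≤ Real.sqrt (4 * (m : ℝ) - 7) := Real.le_sqrt_of_sq_le (by linarith)
  linarith

lemma sub_two_lt_sq_sub_self_of_one_add_sqrt_div_two_lt {m : ℕ} {ρ : ℝ} (hm : 2 ≤ m)
    (h : (1 + Real.sqrt (4 * (m : ℝ) - 7)) / 2 < ρ) : (m : ℝ) - 2 < ρ ^ 2 - ρ := by
  have hm' : (2 : ℝ) ≤ m := by exact_mod_cast hm
  have hsq := Real.sq_sqrt (by linarith : (0 : ℝ) ≤ 4 * m - 7)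
  nlinarith [Real.sqrt_nonneg (4 * (m : ℝ) - 7)]

lemma hasSubgraphCopy_H43 {V : Type*} {G : SimpleGraph V} {u₀ u₁ u₂ u₃ u₄ u₅ : V}
    (h01 : G.Adj u₀ u₁) (h12 : G.Adj u₁ u₂) (h23 : G.Adj u₂ u₃) (h30 : G.Adj u₃ u₀)
    (h04 : G.Adj u₀ u₄) (h45 : G.Adj u₄ u₅) (h50 : G.Adj u₅ u₀)
    (d02 : u₀ ≠ u₂) (d13 : u₁ ≠ u₃) (d14 : u₁ ≠ u₄) (d15 : u₁ ≠ u₅)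
    (d24 : u₂ ≠ u₄) (d25 : u₂ ≠ u₅) (d34 : u₃ ≠ u₄) (d35 : u₃ ≠ u₅) :
    HasSubgraphCopy H43 G := by
  have := h01.ne; have := h12.ne; have := h23.ne; have := h30.ne
  have := h04.ne; have := h45.ne; have := h50.ne
  refine ⟨![u₀, u₁, u₂, u₃, u₄, u₅], fun a b h => ?_, fun a b h => ?_⟩
  · fin_cases a <;> fin_cases b <;> simp at h ⊢ <;>
      first | exact absurd h ‹_› | exact absurd h.symm ‹_›
  · fin_cases a <;> fin_cases b <;> simp [H43] at h ⊢ <;>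
      first | assumption | exact G.adj_symm ‹_›

namespace SimpleGraph

section Counting

variable {V : Type*} [Fintype V] [DecidableEq V] (G : SimpleGraph V) [DecidableRel G.Adj]

/-- The number of ordered pairs `(v, w) ∈ S × T` with `v ~ w`: `adjCount S S = 2 e(S)`, and
`adjCount S T = e(S, T)` when `S` and `T` are disjoint. -/
def adjCount (S T : Finset V) : ℕ := ∑ v ∈ S, #(T ∩ G.neighborFinset v)

def farFinset (u : V) : Finset V := univ \ insert u (G.neighborFinset u)

variable {G} {S : Finset V} {u z : V}

lemma sum_sum_inter_neighborFinset {M : Type*} [AddCommMonoid M] (S T : Finset V) (f : V → M) :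
    ∑ v ∈ S, ∑ w ∈ T ∩ G.neighborFinset v, f w = ∑ w ∈ T, #(S ∩ G.neighborFinset w) • f w := by
  have hfilter : ∀ (A : Finset V) v, A ∩ G.neighborFinset v = A.filter (G.Adj v) := by
    intro A v; ext; simp
  simp_rw [hfilter, sum_filter]
  rw [sum_comm]
  simp_rw [← sum_filter, sum_const, G.adj_comm]

lemma adjCount_comm (S T : Finset V) : G.adjCount S T = G.adjCount T S := by
  have h := sum_sum_inter_neighborFinset (G := G) S T (fun _ => 1)
  simp only [← card_eq_sum_ones, smul_eq_mul, mul_one] at h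
  exact h

lemma adjCount_self_le {T R : Finset V}
    (h : ∀ v ∈ S, v ∉ T → S ∩ G.neighborFinset v ⊆ R) :
    G.adjCount S S ≤ ∑ v ∈ T, #(S ∩ G.neighborFinset v) + ∑ w ∈ R, #(S ∩ G.neighborFinset w) := by
  rw [adjCount, ← sum_filter_add_sum_filter_not S (· ∈ T)]
  gcongr ?_ + ?_
  · exact sum_le_sum_of_subset fun v hv => (mem_filter.1 hv).2
  · calc ∑ v ∈ S.filter (· ∉ T), #(S ∩ G.neighborFinset v)
        ≤ ∑ v ∈ S.filter (· ∉ T), #(R ∩ G.neighborFinset v) := by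
          refine sum_le_sum fun v hv => card_le_card (subset_inter ?_ inter_subset_right)
          rw [mem_filter] at hv
          exact h v hv.1 hv.2
      _ = ∑ w ∈ R, #(S.filter (· ∉ T) ∩ G.neighborFinset w) := adjCount_comm _ _
      _ ≤ ∑ w ∈ R, #(S ∩ G.neighborFinset w) :=
          sum_le_sum fun w _ => card_le_card (inter_subset_inter_right (filter_subset _ _))

lemma two_le_adjCount_self (h : G.adjCount S S ≠ 0) : 2 ≤ G.adjCount S S := by
  obtain ⟨v, hv, hne⟩ := exists_ne_zero_of_sum_ne_zero h
  obtain ⟨w, hw⟩ := card_ne_zero.1 hne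
  rw [mem_inter, mem_neighborFinset] at hw
  have hvw : v ∈ S ∩ G.neighborFinset w := by simpa [hv] using hw.2.symm
  calc 2 ≤ #(S ∩ G.neighborFinset v) + #(S ∩ G.neighborFinset w) := by
        have := card_pos.2 ⟨v, hvw⟩
        omega
    _ = ∑ y ∈ {v, w}, #(S ∩ G.neighborFinset y) :=
        (sum_pair (f := fun y => #(S ∩ G.neighborFinset y)) hw.2.ne).symm
    _ ≤ G.adjCount S S := sum_le_sum_of_subset (by simp [insert_subset_iff, hv, hw.1])

lemma mem_farFinset {u w : V} : w ∈ G.farFinset u ↔ w ≠ u ∧ ¬ G.Adj u w := by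
  simp [farFinset]

lemma coe_farFinset (u : V) : (G.farFinset u : Set V) = Wset G u := by
  ext w; simp [farFinset, Wset]

lemma farFinset_inter_neighborFinset (u : V) : G.farFinset u ∩ G.neighborFinset u = ∅ := by
  ext w; simp [mem_farFinset]

lemma sum_univ_eq_add_sum_neighborFinset_add_sum_farFinset {M : Type*} [AddCommMonoid M]
    (u : V) (f : V → M) :
    ∑ v, f v = f u + ∑ v ∈ G.neighborFinset u, f v + ∑ v ∈ G.farFinset u, f v := by
  rw [farFinset, ← sum_add_sum_compl (insert u (G.neighborFinset u)), compl_eq_univ_sdiff,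
    sum_insert (by simp)]

lemma adjCount_univ_left (u : V) (T : Finset V) :
    G.adjCount univ T = #(T ∩ G.neighborFinset u) + G.adjCount (G.neighborFinset u) T
      + G.adjCount (G.farFinset u) T :=
  sum_univ_eq_add_sum_neighborFinset_add_sum_farFinset u _

lemma two_mul_card_edgeFinset_eq (u : V) :
    2 * #G.edgeFinset = 2 * G.degree u + G.adjCount (G.neighborFinset u) (G.neighborFinset u)
      + 2 * G.adjCount (G.farFinset u) (G.neighborFinset u)
      + G.adjCount (G.farFinset u) (G.farFinset u) := by
  have hdeg : 2 * #G.edgeFinset = G.adjCount univ univ := by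
    simp [adjCount, ← sum_degrees_eq_twice_card_edges, card_neighborFinset_eq_degree]
  rw [hdeg, adjCount_univ_left u, adjCount_comm _ univ, adjCount_univ_left u,
    adjCount_comm (G.farFinset u) univ, adjCount_univ_left u, farFinset_inter_neighborFinset,
    adjCount_comm (G.neighborFinset u) (G.farFinset u)]
  simp only [univ_inter, inter_self, card_neighborFinset_eq_degree, card_empty]
  ring

lemma degree_eq_of_mem_farFinset {w : V} (hw : w ∈ G.farFinset u) :
    G.degree w = #(G.neighborFinset u ∩ G.neighborFinset w)
      + #(G.farFinset u ∩ G.neighborFinset w) := by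
  have h := sum_univ_eq_add_sum_neighborFinset_add_sum_farFinset (G := G) u
    fun y => if G.Adj w y then 1 else 0
  rw [mem_farFinset] at hw
  simp only [sum_boole, Nat.cast_id, G.adj_comm w u, hw.2, if_false, zero_add] at h
  rw [← card_neighborFinset_eq_degree, neighborFinset_eq_filter, h]
  congr 2 <;> ext <;> simp

lemma sum_card_inter_mul_of_star {R : Type*} [NonAssocSemiring R] (hz : z ∈ S)
    (hstar : ∀ v ∈ S, ∀ w ∈ S, G.Adj v w → v = z ∨ w = z) (f : V → R) :
    ∑ v ∈ S, (#(S ∩ G.neighborFinset v) : R) * f v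
      = #(S ∩ G.neighborFinset z) * f z + ∑ v ∈ S ∩ G.neighborFinset z, f v := by
  have hleaf : ∀ v ∈ S.erase z,
      #(S ∩ G.neighborFinset v) = if v ∈ S ∩ G.neighborFinset z then 1 else 0 := by
    intro v hv
    obtain ⟨hvz, hvS⟩ := mem_erase.1 hv
    split_ifs with hL
    · refine card_eq_one.2 ⟨z, eq_singleton_iff_unique_mem.2 ⟨?_, fun w hw => ?_⟩⟩
      · simp only [mem_inter, mem_neighborFinset] at hL ⊢
        exact ⟨hz, hL.2.symm⟩
      · rw [mem_inter, mem_neighborFinset] at hw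
        exact (hstar v hvS w hw.1 hw.2).resolve_left hvz
    · refine card_eq_zero.2 (eq_empty_of_forall_notMem fun w hw => hL ?_)
      rw [mem_inter, mem_neighborFinset] at hw
      obtain rfl := (hstar v hvS w hw.1 hw.2).resolve_left hvz
      simp only [mem_inter, mem_neighborFinset]
      exact ⟨hvS, hw.2.symm⟩
  rw [← add_sum_erase S _ hz, sum_congr rfl fun v hv => by rw [hleaf v hv]]
  simp only [Nat.cast_ite, Nat.cast_one, Nat.cast_zero, ite_mul, one_mul, zero_mul]
  have hL : S ∩ G.neighborFinset z ⊆ S.erase z := fun v hv => by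
    simp only [mem_inter, mem_neighborFinset] at hv
    exact mem_erase.2 ⟨hv.2.ne.symm, hv.1⟩
  rw [sum_ite_mem, inter_eq_right.2 hL]

lemma adjCount_self_of_star (hz : z ∈ S)
    (hstar : ∀ v ∈ S, ∀ w ∈ S, G.Adj v w → v = z ∨ w = z) :
    G.adjCount S S = 2 * #(S ∩ G.neighborFinset z) := by
  have h := sum_card_inter_mul_of_star (R := ℕ) hz hstar fun _ => 1
  simp only [Nat.cast_id, mul_one, ← card_eq_sum_ones] at h
  rw [adjCount, h]
  ring

end Counting

section P3K2

variable {V : Type*} [DecidableEq V] {G : SimpleGraph V}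

/-- Every edge inside `S` meets every path `a b c` inside `S`: `G[S]` contains no `P₃ ∪ K₂`. -/
def P3K2FreeOn (G : SimpleGraph V) (S : Finset V) : Prop :=
  ∀ ⦃a b c p q : V⦄, a ∈ S → b ∈ S → c ∈ S → p ∈ S → q ∈ S → G.Adj a b → G.Adj b c → a ≠ c →
    G.Adj p q → p ∈ ({a, b, c} : Finset V) ∨ q ∈ ({a, b, c} : Finset V)

lemma p3K2FreeOn_neighborFinset [Fintype V] [DecidableRel G.Adj] (hfree : GraphFree H43 G)
    (u : V) : P3K2FreeOn G (G.neighborFinset u) := by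
  intro a b c p q ha hb hc hp hq hab hbc hac hpq
  by_contra h
  simp only [mem_insert, mem_singleton, not_or] at h
  simp only [mem_neighborFinset] at ha hb hc hp hq
  -- the path closes to the 4-cycle `u a b c` and the edge to the triangle `u p q`
  exact hfree <| hasSubgraphCopy_H43 ha hab hbc hc.symm hp hpq hq.symm hb.ne hac
    (Ne.symm h.1.1) (Ne.symm h.2.1) (Ne.symm h.1.2.1) (Ne.symm h.2.2.1)
    (Ne.symm h.1.2.2) (Ne.symm h.2.2.2)

variable [Fintype V] [DecidableRel G.Adj] {S : Finset V} {z v w : V}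

lemma P3K2FreeOn.eq_or_eq_of_two_le_card_sdiff (hS : P3K2FreeOn G S) (hz : z ∈ S) (hv : v ∈ S)
    (hw : w ∈ S) (hvw : G.Adj v w) (h : 2 ≤ #((S ∩ G.neighborFinset z) \ {v, w})) : v = z ∨ w = z := by
  obtain ⟨a, ha, b, hb, hab⟩ := one_lt_card.1 h
  simp only [mem_sdiff, mem_inter, mem_neighborFinset, mem_insert, mem_singleton] at ha hb
  have := hS ha.1.1 hz hb.1.1 hv hw ha.1.2.symm hb.1.2 hab hvw
  simp only [mem_insert, mem_singleton] at this
  grind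

lemma P3K2FreeOn.eq_or_eq_of_four_le (hS : P3K2FreeOn G S) (hz : z ∈ S)
    (h4 : 4 ≤ #(S ∩ G.neighborFinset z)) (hv : v ∈ S) (hw : w ∈ S) (hvw : G.Adj v w) :
    v = z ∨ w = z :=
  hS.eq_or_eq_of_two_le_card_sdiff hz hv hw hvw <| by
    have := le_card_sdiff {v, w} (S ∩ G.neighborFinset z)
    have := card_le_two (a := v) (b := w)
    omega

lemma P3K2FreeOn.inter_neighborFinset_subset (hS : P3K2FreeOn G S) (hz : z ∈ S)
    (h2 : 2 ≤ #(S ∩ G.neighborFinset z)) (hv : v ∈ S)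
    (hvz : v ∉ insert z (S ∩ G.neighborFinset z)) :
    S ∩ G.neighborFinset v ⊆ S ∩ G.neighborFinset z := by
  intro w hw
  by_contra hwz
  rw [mem_insert, not_or] at hvz
  rw [mem_inter, mem_neighborFinset] at hw
  have hdisj : (S ∩ G.neighborFinset z) \ {v, w} = S ∩ G.neighborFinset z :=
    sdiff_eq_self_of_disjoint (by simp [hvz.2, hwz])
  rcases hS.eq_or_eq_of_two_le_card_sdiff hz hv hw.1 hw.2 (by rw [hdisj]; exact h2) with rfl | rfl
  · exact hvz.1 rfl
  · exact hvz.2 (by simpa [hv] using hw.2.symm)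

lemma P3K2FreeOn.inter_neighborFinset_eq_empty (hS : P3K2FreeOn G S) (hz : z ∈ S)
    (h3 : 3 ≤ #(S ∩ G.neighborFinset z)) (hv : v ∈ S)
    (hvz : v ∉ insert z (S ∩ G.neighborFinset z)) :
    S ∩ G.neighborFinset v = ∅ := by
  refine eq_empty_of_forall_notMem fun w hw => ?_
  have hwz := hS.inter_neighborFinset_subset hz (by omega) hv hvz hw
  rw [mem_insert, not_or] at hvz
  have herase : (S ∩ G.neighborFinset z).erase w ⊆ (S ∩ G.neighborFinset z) \ {v, w} := by
    intro y hy
    simp only [mem_erase] at hy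
    simp only [mem_sdiff, mem_insert, mem_singleton, hy, not_or, true_and, not_false_eq_true,
      and_true]
    rintro rfl
    exact hvz.2 hy.2
  have := card_le_card herase
  rw [card_erase_of_mem hwz] at this
  rw [mem_inter, mem_neighborFinset] at hw
  rcases hS.eq_or_eq_of_two_le_card_sdiff hz hv hw.1 hw.2 (by omega) with rfl | rfl
  · exact hvz.1 rfl
  · exact hvz.2 (by simpa [hv] using hw.2.symm)

lemma P3K2FreeOn.star_or_matching_or_adjCount_le (hS : P3K2FreeOn G S) :
    (∃ z ∈ S, ∀ v ∈ S, ∀ w ∈ S, G.Adj v w → v = z ∨ w = z) ∨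
      (∀ v ∈ S, #(S ∩ G.neighborFinset v) ≤ 1) ∨ G.adjCount S S ≤ 12 := by
  by_cases h4 : ∃ z ∈ S, 4 ≤ #(S ∩ G.neighborFinset z)
  · obtain ⟨z, hz, h4⟩ := h4
    exact Or.inl ⟨z, hz, fun v hv w hw => hS.eq_or_eq_of_four_le hz h4 hv hw⟩
  push Not at h4
  have hT : ∀ z ∈ S, insert z (S ∩ G.neighborFinset z) ⊆ S := fun z hz =>
    insert_subset hz inter_subset_left
  have hcard : ∀ z, #(insert z (S ∩ G.neighborFinset z)) ≤ #(S ∩ G.neighborFinset z) + 1 :=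
    fun z => card_insert_le _ _
  by_cases h3 : ∃ z ∈ S, 3 ≤ #(S ∩ G.neighborFinset z)
  · obtain ⟨z, hz, h3⟩ := h3
    refine Or.inr (Or.inr ?_)
    have hsum := sum_le_card_nsmul (insert z (S ∩ G.neighborFinset z)) _ 3
      fun v hv => Nat.le_of_lt_succ (h4 v (hT z hz hv))
    have := adjCount_self_le (G := G) (R := ∅) fun v hv hvT =>
      (hS.inter_neighborFinset_eq_empty hz h3 hv hvT).subset
    simp only [smul_eq_mul, sum_empty] at hsum this
    nlinarith [hcard z, h4 z hz]
  push Not at h3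
  by_cases h2 : ∃ z ∈ S, 2 ≤ #(S ∩ G.neighborFinset z)
  · obtain ⟨z, hz, h2⟩ := h2
    refine Or.inr (Or.inr ?_)
    have hsumT := sum_le_card_nsmul (insert z (S ∩ G.neighborFinset z)) _ 2
      fun v hv => Nat.le_of_lt_succ (h3 v (hT z hz hv))
    have hsumR := sum_le_card_nsmul (S ∩ G.neighborFinset z) _ 2
      fun v hv => Nat.le_of_lt_succ (h3 v (inter_subset_left hv))
    have := adjCount_self_le fun v hv hvT => hS.inter_neighborFinset_subset hz h2 hv hvT
    simp only [smul_eq_mul] at hsumT hsumR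
    nlinarith [hcard z, h3 z hz]
  push Not at h2
  exact Or.inr (Or.inl fun v hv => Nat.le_of_lt_succ (h2 v hv))

end P3K2

section Eigenvector

variable {V : Type*} [Fintype V] {G : SimpleGraph V} [DecidableRel G.Adj] {x : V → ℝ} {ρ : ℝ}
  {S : Finset V} {u : V}

lemma mul_le_degree_mul (hx : ∀ v, ρ * x v = ∑ w ∈ G.neighborFinset v, x w)
    (hmax : ∀ v, x v ≤ x u) (v : V) : ρ * x v ≤ G.degree v * x u := by
  rw [hx, ← card_neighborFinset_eq_degree, ← nsmul_eq_mul, ← sum_const]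
  exact sum_le_sum fun w _ => hmax w

lemma le_mul_of_adj (hx : ∀ v, ρ * x v = ∑ w ∈ G.neighborFinset v, x w)
    (hpos : ∀ v, 0 < x v) {v : V} (h : G.Adj v u) : x u ≤ ρ * x v := by
  rw [hx]
  exact single_le_sum (fun w _ => (hpos w).le) (by simpa using h)

lemma card_mul_le_mul_sum (hx : ∀ v, ρ * x v = ∑ w ∈ G.neighborFinset v, x w)
    (hpos : ∀ v, 0 < x v) (hS : S ⊆ G.neighborFinset u) : #S * x u ≤ ρ * ∑ v ∈ S, x v := by
  rw [mul_sum, ← nsmul_eq_mul, ← sum_const]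
  exact sum_le_sum fun v hv => le_mul_of_adj hx hpos (G.adj_symm (by simpa using hS hv))

lemma mul_sum_degree_mul_le (hx : ∀ v, ρ * x v = ∑ w ∈ G.neighborFinset v, x w)
    (hmax : ∀ v, x v ≤ x u) (hu : 0 ≤ x u) (hdeg : ∀ w ∈ S, 1 ≤ G.degree w ∧ G.degree w ≤ 2) :
    ρ * ∑ w ∈ S, (G.degree w : ℝ) * x w ≤ (3 * ∑ w ∈ S, (G.degree w : ℝ) - 2 * #S) * x u := by
  calc ρ * ∑ w ∈ S, (G.degree w : ℝ) * x w = ∑ w ∈ S, (G.degree w : ℝ) * (ρ * x w) := by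
        rw [mul_sum]; exact sum_congr rfl fun _ _ => by ring
    _ ≤ ∑ w ∈ S, (3 * (G.degree w : ℝ) - 2) * x u := sum_le_sum fun w hw => by
        have h₁ : (1 : ℝ) ≤ G.degree w := by exact_mod_cast (hdeg w hw).1
        have h₂ : (G.degree w : ℝ) ≤ 2 := by exact_mod_cast (hdeg w hw).2
        have := mul_le_mul_of_nonneg_left (mul_le_degree_mul hx hmax w)
          (by linarith : (0 : ℝ) ≤ G.degree w)
        nlinarith [mul_nonneg (mul_nonneg (sub_nonneg.2 h₁) (sub_nonneg.2 h₂)) hu]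
    _ = _ := by rw [← sum_mul, sum_sub_distrib, ← mul_sum, sum_const, nsmul_eq_mul, mul_comm 2]

variable [DecidableEq V] {z : V}

lemma sq_mul_eq_degree_mul_add_sum_add_sum (hx : ∀ v, ρ * x v = ∑ w ∈ G.neighborFinset v, x w)
    (u : V) :
    ρ ^ 2 * x u = G.degree u * x u
      + ∑ v ∈ G.neighborFinset u, (#(G.neighborFinset u ∩ G.neighborFinset v) : ℝ) * x v
      + ∑ v ∈ G.farFinset u, (#(G.neighborFinset u ∩ G.neighborFinset v) : ℝ) * x v := by
  have walks : ρ ^ 2 * x u = ∑ v, (#(G.neighborFinset u ∩ G.neighborFinset v) : ℝ) * x v :=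
    calc ρ ^ 2 * x u = ∑ w ∈ G.neighborFinset u, ρ * x w := by rw [sq, mul_assoc, hx, mul_sum]
      _ = ∑ w ∈ G.neighborFinset u, ∑ v ∈ univ ∩ G.neighborFinset w, x v := by simp [hx]
      _ = _ := by rw [sum_sum_inter_neighborFinset]; simp [nsmul_eq_mul]
  rw [walks, sum_univ_eq_add_sum_neighborFinset_add_sum_farFinset (G := G) u, inter_self,
    card_neighborFinset_eq_degree]

lemma sum_card_inter_mul_le (hmax : ∀ v, x v ≤ x u) (S T : Finset V) :
    ∑ v ∈ S, (#(T ∩ G.neighborFinset v) : ℝ) * x v ≤ G.adjCount S T * x u := by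
  rw [adjCount, Nat.cast_sum, sum_mul]
  exact sum_le_sum fun v _ => mul_le_mul_of_nonneg_left (hmax v) (Nat.cast_nonneg _)

lemma sq_le_degree_add_adjCount (hx : ∀ v, ρ * x v = ∑ w ∈ G.neighborFinset v, x w)
    (hmax : ∀ v, x v ≤ x u) (hu : 0 < x u) :
    ρ ^ 2 ≤ G.degree u + G.adjCount (G.neighborFinset u) (G.neighborFinset u)
      + G.adjCount (G.farFinset u) (G.neighborFinset u) := by
  have h₁ := sum_card_inter_mul_le (G := G) hmax (G.neighborFinset u) (G.neighborFinset u)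
  have h₂ := sum_card_inter_mul_le (G := G) hmax (G.farFinset u) (G.neighborFinset u)
  refine le_of_mul_le_mul_right ?_ hu
  linarith [sq_mul_eq_degree_mul_add_sum_add_sum hx u]

lemma adjCount_farFinset_add_twelve_lt (hx : ∀ v, ρ * x v = ∑ w ∈ G.neighborFinset v, x w)
    (hmax : ∀ v, x v ≤ x u) (hu : 0 < x u) (h8 : 8 < ρ)
    (hρ : (#G.edgeFinset : ℝ) - 2 < ρ ^ 2 - ρ) :
    G.adjCount (G.farFinset u) (G.farFinset u) + 12
      < G.adjCount (G.neighborFinset u) (G.neighborFinset u) := by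
  have hsq := sq_le_degree_add_adjCount hx hmax hu
  have hedges := congrArg (Nat.cast (R := ℝ)) (two_mul_card_edgeFinset_eq (G := G) u)
  push_cast at hedges
  exact_mod_cast (by linarith : (G.adjCount (G.farFinset u) (G.farFinset u) : ℝ) + 12
    < G.adjCount (G.neighborFinset u) (G.neighborFinset u))

lemma adjCount_add_adjCount_lt_four_of_matching
    (hx : ∀ v, ρ * x v = ∑ w ∈ G.neighborFinset v, x w) (hmax : ∀ v, x v ≤ x u)
    (hpos : ∀ v, 0 < x v) (hρ : (#G.edgeFinset : ℝ) - 2 < ρ ^ 2 - ρ)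
    (hmatch : ∀ v ∈ G.neighborFinset u, #(G.neighborFinset u ∩ G.neighborFinset v) ≤ 1) :
    G.adjCount (G.neighborFinset u) (G.neighborFinset u)
      + G.adjCount (G.farFinset u) (G.farFinset u) < 4 := by
  have hU : ∑ v ∈ G.neighborFinset u, (#(G.neighborFinset u ∩ G.neighborFinset v) : ℝ) * x v
      ≤ ρ * x u := by
    rw [hx]
    refine sum_le_sum fun v hv => mul_le_of_le_one_left (hpos v).le ?_
    exact_mod_cast hmatch v hv
  have hW := sum_card_inter_mul_le (G := G) hmax (G.farFinset u) (G.neighborFinset u)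
  have hle : ρ ^ 2 - ρ ≤ G.degree u + G.adjCount (G.farFinset u) (G.neighborFinset u) :=
    le_of_mul_le_mul_right (by linarith [sq_mul_eq_degree_mul_add_sum_add_sum hx u]) (hpos u)
  have hedges := congrArg (Nat.cast (R := ℝ)) (two_mul_card_edgeFinset_eq (G := G) u)
  push_cast at hedges
  exact_mod_cast (by linarith : (G.adjCount (G.neighborFinset u) (G.neighborFinset u) : ℝ)
    + G.adjCount (G.farFinset u) (G.farFinset u) < 4)

lemma card_inter_neighborFinset_le_two_of_mem_farFinset (hfree : GraphFree H43 G)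
    (hz : z ∈ G.neighborFinset u)
    (h3 : 3 ≤ #(G.neighborFinset u ∩ G.neighborFinset z)) {w : V} (hw : w ∈ G.farFinset u) :
    #(G.neighborFinset u ∩ G.neighborFinset w) ≤ 2 := by
  by_contra! h
  obtain ⟨p, hp, q, hq, hpq⟩ := one_lt_card.1 <|
    lt_of_lt_of_le (by simp; omega) (le_card_sdiff {z} (G.neighborFinset u ∩ G.neighborFinset w))
  obtain ⟨ℓ, hℓ⟩ := card_pos.1 <| lt_of_lt_of_le (by have := card_le_two (a := p) (b := q); omega)
    (le_card_sdiff {p, q} (G.neighborFinset u ∩ G.neighborFinset z))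
  simp only [mem_sdiff, mem_inter, mem_neighborFinset, mem_insert, mem_singleton, not_or]
    at hp hq hℓ
  rw [mem_neighborFinset] at hz
  rw [mem_farFinset] at hw
  -- the 4-cycle `u p w q` and the triangle `u z ℓ`
  exact hfree <| hasSubgraphCopy_H43 hp.1.1 hp.1.2.symm hq.1.2 hq.1.1.symm hz hℓ.1.2 hℓ.1.1.symm
    (Ne.symm hw.1) hpq hp.2 (Ne.symm hℓ.2.1) (fun h => hw.2 (h ▸ hz)) (fun h => hw.2 (h ▸ hℓ.1.1))
    hq.2 (Ne.symm hℓ.2.2)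

lemma sq_sub_mul_eq_of_star (hx : ∀ v, ρ * x v = ∑ w ∈ G.neighborFinset v, x w)
    (hz : z ∈ G.neighborFinset u)
    (hstar : ∀ v ∈ G.neighborFinset u, ∀ w ∈ G.neighborFinset u, G.Adj v w → v = z ∨ w = z) :
    (ρ ^ 2 - ρ) * x u = G.degree u * x u + (#(G.neighborFinset u ∩ G.neighborFinset z) - 1) * x z
      - ∑ v ∈ G.neighborFinset u \ insert z (G.neighborFinset u ∩ G.neighborFinset z), x v
      + ∑ w ∈ G.farFinset u, (#(G.neighborFinset u ∩ G.neighborFinset w) : ℝ) * x w := by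
  have hsplit : ∑ v ∈ G.neighborFinset u, x v
      = x z + ∑ v ∈ G.neighborFinset u ∩ G.neighborFinset z, x v
      + ∑ v ∈ G.neighborFinset u \ insert z (G.neighborFinset u ∩ G.neighborFinset z), x v := by
    rw [← sum_sdiff (insert_subset hz inter_subset_left),
      sum_insert (s := G.neighborFinset u ∩ G.neighborFinset z) (by simp)]
    ring
  have hwalks := sq_mul_eq_degree_mul_add_sum_add_sum hx u
  rw [sum_card_inter_mul_of_star hz hstar] at hwalks
  linear_combination hwalks - hx u - hsplit

lemma adjCount_farFinset_self_eq_zero_of_star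
    (hx : ∀ v, ρ * x v = ∑ w ∈ G.neighborFinset v, x w) (hmax : ∀ v, x v ≤ x u)
    (hpos : ∀ v, 0 < x v) (hρ : (#G.edgeFinset : ℝ) - 2 < ρ ^ 2 - ρ)
    (hz : z ∈ G.neighborFinset u)
    (hstar : ∀ v ∈ G.neighborFinset u, ∀ w ∈ G.neighborFinset u, G.Adj v w → v = z ∨ w = z)
    (hL : 1 ≤ #(G.neighborFinset u ∩ G.neighborFinset z)) :
    G.adjCount (G.farFinset u) (G.farFinset u) = 0 := by
  have hQ := sum_card_inter_mul_le (G := G) hmax (G.farFinset u) (G.neighborFinset u)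
  have hU₀ := sum_nonneg fun v (_ : v ∈ G.neighborFinset u \
    insert z (G.neighborFinset u ∩ G.neighborFinset z)) => (hpos v).le
  have hxz : ((#(G.neighborFinset u ∩ G.neighborFinset z) : ℝ) - 1) * x z
      ≤ (#(G.neighborFinset u ∩ G.neighborFinset z) - 1) * x u :=
    mul_le_mul_of_nonneg_left (hmax z) (by simp only [sub_nonneg, Nat.one_le_cast, hL])
  have hle : ρ ^ 2 - ρ ≤ G.degree u + (#(G.neighborFinset u ∩ G.neighborFinset z) - 1)
      + G.adjCount (G.farFinset u) (G.neighborFinset u) :=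
    le_of_mul_le_mul_right (by linarith [sq_sub_mul_eq_of_star hx hz hstar]) (hpos u)
  have hedges := two_mul_card_edgeFinset_eq (G := G) u
  rw [adjCount_self_of_star hz hstar] at hedges
  have hlt : G.adjCount (G.farFinset u) (G.farFinset u) < 2 := by
    have := congrArg (Nat.cast (R := ℝ)) hedges
    push_cast at this
    exact_mod_cast (by linarith : (G.adjCount (G.farFinset u) (G.farFinset u) : ℝ) < 2)
  by_contra h
  exact absurd (two_le_adjCount_self h) (by omega)

lemma mul_sub_one_lt_of_star (hx : ∀ v, ρ * x v = ∑ w ∈ G.neighborFinset v, x w)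
    (hmax : ∀ v, x v ≤ x u) (hpos : ∀ v, 0 < x v) (hρ₀ : 0 < ρ)
    (hρ : (#G.edgeFinset : ℝ) - 2 < ρ ^ 2 - ρ) (hz : z ∈ G.neighborFinset u)
    (hstar : ∀ v ∈ G.neighborFinset u, ∀ w ∈ G.neighborFinset u, G.Adj v w → v = z ∨ w = z)
    (hL : 1 ≤ #(G.neighborFinset u ∩ G.neighborFinset z))
    (hW : ∀ w ∈ G.farFinset u, #(G.neighborFinset u ∩ G.neighborFinset w) = G.degree w ∧
      1 ≤ G.degree w ∧ G.degree w ≤ 2)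
    (hm : #G.edgeFinset = G.degree u + #(G.neighborFinset u ∩ G.neighborFinset z)
      + ∑ w ∈ G.farFinset u, G.degree w) :
    ρ * ((∑ w ∈ G.farFinset u, G.degree w : ℕ) - 1 : ℝ)
      < 3 * (∑ w ∈ G.farFinset u, G.degree w : ℕ) - 2 * #(G.farFinset u)
        - #(G.neighborFinset u \ insert z (G.neighborFinset u ∩ G.neighborFinset z)) := by
  have hQ := mul_sum_degree_mul_le hx hmax (hpos u).le fun w hw => (hW w hw).2
  have hU₀ := card_mul_le_mul_sum hx hpos (sdiff_subset (s := G.neighborFinset u)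
    (t := insert z (G.neighborFinset u ∩ G.neighborFinset z)))
  -- multiply the star identity by `ρ`, then use `ρ x(v) ≥ x(u)` on `U₀` and
  -- `ρ x(w) ≤ d(w) x(u)` on `W`
  have hE := congrArg (ρ * ·) (sq_sub_mul_eq_of_star hx hz hstar)
  rw [sum_congr (s₁ := G.farFinset u) rfl fun w hw => by rw [(hW w hw).1]] at hE
  have hxz : ρ * ((#(G.neighborFinset u ∩ G.neighborFinset z) - 1) * x z)
      ≤ ρ * ((#(G.neighborFinset u ∩ G.neighborFinset z) - 1) * x u) :=
    mul_le_mul_of_nonneg_left (mul_le_mul_of_nonneg_left (hmax z)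
      (by simp only [sub_nonneg, Nat.one_le_cast, hL])) hρ₀.le
  have hlt : ρ * ((#G.edgeFinset - 2) * x u) < ρ * ((ρ ^ 2 - ρ) * x u) :=
    mul_lt_mul_of_pos_left (mul_lt_mul_of_pos_right hρ (hpos u)) hρ₀
  rw [hm] at hlt
  push_cast at hlt hQ ⊢
  refine lt_of_mul_lt_mul_right ?_ (hpos u).le
  linarith

lemma farFinset_eq_empty_of_star (hfree : GraphFree H43 G) (hnoiso : ∀ v, ∃ w, G.Adj v w)
    (hodd : Odd #G.edgeFinset)
    (hx : ∀ v, ρ * x v = ∑ w ∈ G.neighborFinset v, x w) (hmax : ∀ v, x v ≤ x u)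
    (hpos : ∀ v, 0 < x v) (h8 : 8 < ρ) (hρ : (#G.edgeFinset : ℝ) - 2 < ρ ^ 2 - ρ)
    (hz : z ∈ G.neighborFinset u)
    (hstar : ∀ v ∈ G.neighborFinset u, ∀ w ∈ G.neighborFinset u, G.Adj v w → v = z ∨ w = z)
    (h3 : 3 ≤ #(G.neighborFinset u ∩ G.neighborFinset z)) :
    G.farFinset u = ∅ := by
  have hSW := adjCount_farFinset_self_eq_zero_of_star hx hmax hpos hρ hz hstar (by omega)
  have hW : ∀ w ∈ G.farFinset u, #(G.neighborFinset u ∩ G.neighborFinset w) = G.degree w ∧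
      1 ≤ G.degree w ∧ G.degree w ≤ 2 := fun w hw => by
    have hdeg : #(G.neighborFinset u ∩ G.neighborFinset w) = G.degree w := by
      rw [degree_eq_of_mem_farFinset hw, sum_eq_zero_iff.1 hSW w hw, add_zero]
    exact ⟨hdeg, G.degree_pos_iff_exists_adj w |>.2 (hnoiso w),
      hdeg ▸ card_inter_neighborFinset_le_two_of_mem_farFinset hfree hz h3 hw⟩
  have hedges := two_mul_card_edgeFinset_eq (G := G) u
  rw [adjCount_self_of_star hz hstar, hSW, adjCount, sum_congr rfl fun w hw => (hW w hw).1]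
    at hedges
  have key := mul_sub_one_lt_of_star hx hmax hpos (by linarith) hρ hz hstar (by omega) hW
    (by omega)
  have hcardW : #(G.farFinset u) ≤ ∑ w ∈ G.farFinset u, G.degree w := by
    rw [card_eq_sum_ones]
    exact sum_le_sum fun w hw => (hW w hw).2.1
  have hd := card_sdiff_add_card_eq_card
    (insert_subset hz (inter_subset_left (s₂ := G.neighborFinset z)))
  rw [card_insert_of_notMem (by simp), card_neighborFinset_eq_degree] at hd
  set U₀ := #(G.neighborFinset u \ insert z (G.neighborFinset u ∩ G.neighborFinset z))
  set W := #(G.farFinset u)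
  set TW := ∑ w ∈ G.farFinset u, G.degree w
  by_contra hne
  have hW1 : 1 ≤ W := card_pos.2 (nonempty_iff_ne_empty.2 hne)
  have hTW1 : TW ≤ 1 := by
    by_contra! h
    have : (2 : ℝ) ≤ TW := by exact_mod_cast h
    have : (1 : ℝ) ≤ W := by exact_mod_cast hW1
    nlinarith
  have hU₀ : U₀ = 0 := by
    have : (TW : ℝ) = 1 := by exact_mod_cast (by omega : TW = 1)
    have : (W : ℝ) = 1 := by exact_mod_cast (by omega : W = 1)
    have : (U₀ : ℝ) < 1 := by nlinarith
    exact Nat.lt_one_iff.1 (by exact_mod_cast this)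
  obtain ⟨k, hk⟩ := hodd
  omega

end Eigenvector

end SimpleGraph

open SimpleGraph in
theorem stmt_10_general {V : Type*} [Fintype V] [DecidableEq V] (m : ℕ) (hm : 58 ≤ m) (hodd : Odd m)
    (Ghat : SimpleGraph V) [DecidableRel Ghat.Adj]
    (hext : isExtremal m Ghat)
    (x : V → ℝ) (hpos : ∀ v, 0 < x v)
    (heig : (SimpleGraph.adjMatrix ℝ Ghat).mulVec x = specRad Ghat • x)
    (ustar : V) (hmaxx : ∀ v, x v ≤ x ustar)
    (hlam : (1 + Real.sqrt (4 * (m : ℝ) - 7)) / 2 < specRad Ghat) :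
    Wset Ghat ustar = ∅ := by
  obtain ⟨⟨hfree, hcard, hnoiso⟩, -, -⟩ := hext
  obtain rfl : #Ghat.edgeFinset = m := by rwa [← coe_edgeFinset, Set.ncard_coe_finset] at hcard
  have hx : ∀ v, specRad Ghat * x v = ∑ w ∈ Ghat.neighborFinset v, x w := fun v => by
    rw [← adjMatrix_mulVec_apply, heig, Pi.smul_apply, smul_eq_mul]
  have h8 := eight_lt_of_one_add_sqrt_div_two_lt hm hlam
  have hρ := sub_two_lt_sq_sub_self_of_one_add_sqrt_div_two_lt (by omega) hlam
  have h12 := adjCount_farFinset_add_twelve_lt hx hmaxx (hpos ustar) h8 hρ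
  rw [← coe_farFinset, Finset.coe_eq_empty]
  rcases (p3K2FreeOn_neighborFinset hfree ustar).star_or_matching_or_adjCount_le with
    ⟨z, hz, hstar⟩ | hmatch | hsmall
  · refine farFinset_eq_empty_of_star hfree hnoiso hodd hx hmaxx hpos h8 hρ hz hstar ?_
    have := adjCount_self_of_star hz hstar
    omega
  · have := adjCount_add_adjCount_lt_four_of_matching hx hmaxx hpos hρ hmatch
    omega
  · omega

/-- For odd `m ≥ 58`, if `Ĝ` is a connected spectral-extremal graph in
`𝒢(m,H(4,3)) \ {K₂ ∨ ((m-1)/2)K₁}` which is moreover not isomorphic to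
`K₁ ∨ (K_{1,(m-3)/2} ∪ 2K₁)`, and `λ(Ĝ) > (1 + √(4m-7))/2`, then `W = ∅`. -/
theorem stmt_10 {V : Type*} [Fintype V] [DecidableEq V] (m : ℕ) (hm : 58 ≤ m) (hodd : Odd m)
    (Ghat : SimpleGraph V) [DecidableRel Ghat.Adj] (hconn : Ghat.Connected)
    (hext : isExtremal m Ghat)
    (hnotext : ¬ Nonempty (Ghat ≃g extGraph ((m - 3) / 2)))
    (x : V → ℝ) (hpos : ∀ v, 0 < x v) (hunit : ∑ v : V, x v ^ 2 = 1)
    (heig : (SimpleGraph.adjMatrix ℝ Ghat).mulVec x = specRad Ghat • x)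
    (ustar : V) (hmaxx : ∀ v, x v ≤ x ustar)
    (hlam : (1 + Real.sqrt (4 * (m : ℝ) - 7)) / 2 < specRad Ghat) :
    Wset Ghat ustar = ∅ :=
  stmt_10_general m hm hodd Ghat hext x hpos heig ustar hmaxx hlam
end

section
/- For every integer m ≥ 58 and every real x > (1 + √(4m−7))/2, the polynomial f_4(x) = x⁴ − m·x² − (m−5)·x + 2(m−5) satisfies f_4(x) > 0. In particular, f_4(x) = (x² + x − 1)(x² − x − (m−2)) + 2x + (m−8). -/
open Finset

/-
The quartic splits as `(x² + x - 1)(x² - x - (m - 2)) + (2x + m - 8)`. Beyond the larger root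
`(1 + √(4m - 7))/2` of `x² - x - (m - 2)` both quadratic factors are positive, and so is the
linear remainder once `m ≥ 6`.
-/

def f4 (m x : ℝ) : ℝ := x ^ 4 - m * x ^ 2 - (m - 5) * x + 2 * (m - 5)

theorem f4_eq (m x : ℝ) :
    f4 m x = (x ^ 2 + x - 1) * (x ^ 2 - x - (m - 2)) + 2 * x + (m - 8) := by
  unfold f4; ring

/-- Holds for every `c`: when `1 + 4c < 0` the square root is `0` and the quadratic has no
real root. -/
theorem sq_sub_self_sub_pos_of_root_lt {c x : ℝ} (hx : (1 + √(1 + 4 * c)) / 2 < x) :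
    0 < x ^ 2 - x - c := by
  have h : 1 + 4 * c < (2 * x - 1) ^ 2 := Real.lt_sq_of_sqrt_lt (by linarith)
  nlinarith

theorem f4_pos {m x : ℝ} (hm : 6 ≤ m) (hx : (1 + √(4 * m - 7)) / 2 < x) : 0 < f4 m x := by
  have hquad : 0 < x ^ 2 - x - (m - 2) :=
    sq_sub_self_sub_pos_of_root_lt (by convert hx using 4; ring)
  have hx1 : 1 < x := by
    have : 1 ≤ √(4 * m - 7) := Real.one_le_sqrt.mpr (by linarith)
    linarith
  have hfactor : 0 < x ^ 2 + x - 1 := by nlinarith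
  rw [f4_eq]
  nlinarith [mul_pos hfactor hquad]

/-- For every integer `m ≥ 58` and real `x > (1 + √(4m-7))/2`,
`f₄(x) = x⁴ - m·x² - (m-5)·x + 2(m-5) > 0`; in particular
`f₄(x) = (x² + x - 1)(x² - x - (m-2)) + 2x + (m-8)`. -/
theorem stmt_15 (m : ℕ) (hm : 58 ≤ m) :
    (∀ x : ℝ, (1 + Real.sqrt (4 * (m : ℝ) - 7)) / 2 < x →
      0 < x ^ 4 - (m : ℝ) * x ^ 2 - ((m : ℝ) - 5) * x + 2 * ((m : ℝ) - 5)) ∧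
    (∀ x : ℝ, x ^ 4 - (m : ℝ) * x ^ 2 - ((m : ℝ) - 5) * x + 2 * ((m : ℝ) - 5)
      = (x ^ 2 + x - 1) * (x ^ 2 - x - ((m : ℝ) - 2)) + 2 * x + ((m : ℝ) - 8)) := by
  have hm6 : (6 : ℝ) ≤ m := by exact_mod_cast (show 6 ≤ m by omega)
  exact ⟨fun x hx => f4_pos hm6 hx, f4_eq m⟩
end

section
/- Let m, r, s be integers with m ≥ 58 odd, r ≥ 7, 2 ≤ s ≤ r, and m = 2r + s + 1 (equivalently 2(r−s) = m − 3s − 1). Then for every real x > (1 + √(4m−7))/2, the polynomial f(x) = x⁴ − x³ + (1−m)·x² + s·x − 3s² + m·s − s satisfies f(x) > 0. -/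
open Finset

theorem lt_sq_sub_self_of_half_one_add_sqrt_lt {c x : ℝ} (hx : (1 + √(4 * c + 1)) / 2 < x) :
    c < x ^ 2 - x := by
  have hpos : 0 < 2 * x - 1 := by linarith [Real.sqrt_nonneg (4 * c + 1)]
  have hsq := (Real.sqrt_lt' hpos).mp (by linarith)
  nlinarith

theorem quartic_pos {M S x : ℝ} (hS : 2 ≤ S) (hM : 3 * S + 1 ≤ M) (hx : 5 ≤ x)
    (hq : M - 2 < x ^ 2 - x) :
    0 < x ^ 4 - x ^ 3 + (1 - M) * x ^ 2 + S * x - 3 * S ^ 2 + M * S - S := by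
  have hprod : 0 < (x ^ 2 - x - (M - 2)) * (x ^ 2 - 1) := mul_pos (by linarith) (by nlinarith)
  have hlin : 0 ≤ (S - 1) * (x - 5) := mul_nonneg (by linarith) (by linarith)
  have hconst : 0 ≤ (S - 1) * (M - 3 * S - 1) := mul_nonneg (by linarith) (by linarith)
  -- `f = (x² - x - (M - 2))(x² - 1) + (S - 1)(x - 5) + (S - 1)(M - 3S - 1) + 2S - 4`
  nlinarith

theorem stmt_16_general (m r sv : ℕ) (hm : 58 ≤ m)
    (hs2 : 2 ≤ sv) (hsr : sv ≤ r) (hmrs : m = 2 * r + sv + 1) :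
    ∀ x : ℝ, (1 + Real.sqrt (4 * (m : ℝ) - 7)) / 2 < x →
      0 < x ^ 4 - x ^ 3 + (1 - (m : ℝ)) * x ^ 2 + (sv : ℝ) * x
          - 3 * (sv : ℝ) ^ 2 + (m : ℝ) * (sv : ℝ) - (sv : ℝ) := by
  intro x hx
  have hm' : (58 : ℝ) ≤ m := by exact_mod_cast hm
  have hs2' : (2 : ℝ) ≤ sv := by exact_mod_cast hs2
  have hms : 3 * (sv : ℝ) + 1 ≤ m := by exact_mod_cast (by omega : 3 * sv + 1 ≤ m)
  have hq : (m : ℝ) - 2 < x ^ 2 - x :=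
    lt_sq_sub_self_of_half_one_add_sqrt_lt (by convert hx using 4; ring)
  have hx5 : 5 ≤ x := by nlinarith [Real.sqrt_nonneg (4 * (m : ℝ) - 7)]
  exact quartic_pos hs2' hms hx5 hq

/-- For integers `m, r, s` with odd `m ≥ 58`, `r ≥ 7`, `2 ≤ s ≤ r` and
`m = 2r + s + 1`, the polynomial `f(x) = x⁴ - x³ + (1-m)x² + s·x - 3s² + m·s - s` is
positive for all real `x > (1 + √(4m-7))/2`. -/
theorem stmt_16 (m r sv : ℕ) (hm : 58 ≤ m) (hodd : Odd m) (hr : 7 ≤ r)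
    (hs2 : 2 ≤ sv) (hsr : sv ≤ r) (hmrs : m = 2 * r + sv + 1) :
    ∀ x : ℝ, (1 + Real.sqrt (4 * (m : ℝ) - 7)) / 2 < x →
      0 < x ^ 4 - x ^ 3 + (1 - (m : ℝ)) * x ^ 2 + (sv : ℝ) * x
          - 3 * (sv : ℝ) ^ 2 + (m : ℝ) * (sv : ℝ) - (sv : ℝ) :=
  stmt_16_general m r sv hm hs2 hsr hmrs
end
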